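/- arXiv:1501.06105 — 9 statements merged into one kernel-verified Lean document; each statement's English description precedes it below -/
import Mathlib

section
/- Let (s_n) be the integer sequence defined by s_0=2, s_1=24, s_2=256, and s_n = 20 s_{n-1} - 64 s_{n-2} - 384 s_{n-3} for n≥3. Then for all n≥0, s_n = 4^n · Σ_{k=0}^{⌊(n+1)/2⌋} C(n+2, 2k+1) · 3^k, where C denotes the binomial coefficient. -/
/-!
Writing `(1 + √3)^m = B m + A m √3`, the binomial theorem gives
`A m = ∑ₖ C(m, 2k+1) 3^k`, and `(1 + √3)^2 = 2 (1 + √3) + 2` gives `A (m+2) = 2 A (m+1) + 2 A m`.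
Hence `t n = 4^n A (n+2)` satisfies `t (n+2) = 8 t (n+1) + 32 t n`, and since
`x^3 - 20x^2 + 64x + 384 = (x^2 - 8x - 32)(x - 12)`, also the recurrence of `s`.
Both sequences start with `2, 24, 256`, so they coincide.
-/

open Finset

section BinomSum

variable {R : Type*} [CommRing R] (d : R)

/-- `(1 + √d)^m = evenBinomSum d m + oddBinomSum d m * √d`. -/
def oddBinomSum (m : ℕ) : R := ∑ k ∈ range (m + 1), (m.choose (2 * k + 1) : R) * d ^ k

def evenBinomSum (m : ℕ) : R := ∑ k ∈ range (m + 1), (m.choose (2 * k) : R) * d ^ k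

theorem sum_range_add_choose_mul_pow {m N : ℕ} (i : ℕ) (hm : m < 2 * N + i) (j : ℕ) :
    ∑ k ∈ range (N + j), (m.choose (2 * k + i) : R) * d ^ k
      = ∑ k ∈ range N, (m.choose (2 * k + i) : R) * d ^ k := by
  rw [sum_range_add, add_eq_left]
  refine sum_eq_zero fun k _ => ?_
  rw [Nat.choose_eq_zero_of_lt (by omega), Nat.cast_zero, zero_mul]

theorem oddBinomSum_eq_sum_range {m N : ℕ} (hm : m ≤ 2 * N) :
    oddBinomSum d m = ∑ k ∈ range N, (m.choose (2 * k + 1) : R) * d ^ k := by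
  rw [oddBinomSum, ← sum_range_add_choose_mul_pow d 1 (by omega : m < 2 * (m + 1) + 1) N,
    add_comm, sum_range_add_choose_mul_pow d 1 (by omega)]

theorem oddBinomSum_succ (m : ℕ) :
    oddBinomSum d (m + 1) = oddBinomSum d m + evenBinomSum d m := by
  have pascal : ∀ k, ((m + 1).choose (2 * k + 1) : R) * d ^ k
      = (m.choose (2 * k + 0) : R) * d ^ k + (m.choose (2 * k + 1) : R) * d ^ k := by
    intro k
    rw [Nat.choose_succ_succ', Nat.cast_add, add_mul, add_zero, add_comm]
  rw [oddBinomSum, sum_congr rfl fun k _ => pascal k, sum_add_distrib,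
    sum_range_add_choose_mul_pow d 0 (by omega), sum_range_add_choose_mul_pow d 1 (by omega),
    add_comm]
  rfl

theorem evenBinomSum_succ (m : ℕ) :
    evenBinomSum d (m + 1) = d * oddBinomSum d m + evenBinomSum d m := by
  have pascal : ∀ k, ((m + 1).choose (2 * (k + 1)) : R) * d ^ (k + 1)
      = d * ((m.choose (2 * k + 1) : R) * d ^ k) + (m.choose (2 * (k + 1)) : R) * d ^ (k + 1) := by
    intro k
    rw [show 2 * (k + 1) = 2 * k + 1 + 1 by ring, Nat.choose_succ_succ', Nat.cast_add]
    ring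
  have hm : evenBinomSum d m = ∑ k ∈ range (m + 1 + 1), (m.choose (2 * k + 0) : R) * d ^ k :=
    (sum_range_add_choose_mul_pow d 0 (by omega) 1).symm
  rw [evenBinomSum, hm, sum_range_succ' (fun k => ((m + 1).choose (2 * k) : R) * d ^ k),
    sum_range_succ' (fun k => (m.choose (2 * k + 0) : R) * d ^ k), sum_congr rfl fun k _ => pascal k,
    sum_add_distrib, ← mul_sum, ← oddBinomSum, add_assoc]
  simp

theorem oddBinomSum_add_two (m : ℕ) :
    oddBinomSum d (m + 2) = 2 * oddBinomSum d (m + 1) + (d - 1) * oddBinomSum d m := by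
  linear_combination oddBinomSum_succ d (m + 1) + evenBinomSum_succ d m - oddBinomSum_succ d m

end BinomSum

def sRecurrence : LinearRecurrence ℤ := ⟨3, ![-384, -64, 20]⟩

theorem isSolution_sRecurrence_iff (u : ℕ → ℤ) :
    sRecurrence.IsSolution u ↔ ∀ n, u (n + 3) = 20 * u (n + 2) - 64 * u (n + 1) - 384 * u n := by
  refine forall_congr' fun n => ?_
  change u (n + 3) = ∑ i : Fin 3, ![-384, -64, 20] i * u (n + i) ↔ _
  simp [Fin.sum_univ_three]
  ring_nf

theorem isSolution_sRecurrence_four_pow_mul_oddBinomSum :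
    sRecurrence.IsSolution fun n => 4 ^ n * oddBinomSum (3 : ℤ) (n + 2) := by
  rw [isSolution_sRecurrence_iff]
  intro n
  have h₄ := oddBinomSum_add_two (3 : ℤ) (n + 2)
  have h₅ := oddBinomSum_add_two (3 : ℤ) (n + 3)
  linear_combination 64 * 4 ^ n * h₅ - 192 * 4 ^ n * h₄

theorem stmt3 (s : ℕ → ℤ)
    (h0 : s 0 = 2) (h1 : s 1 = 24) (h2 : s 2 = 256)
    (hrec : ∀ n, s (n + 3) = 20 * s (n + 2) - 64 * s (n + 1) - 384 * s n) :
    ∀ n, s n = 4 ^ n *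
      ∑ k ∈ Finset.range ((n + 1) / 2 + 1), ((n + 2).choose (2 * k + 1) : ℤ) * 3 ^ k := by
  have hs := (isSolution_sRecurrence_iff s).2 hrec
  have heq := (sRecurrence.eq_iff_eqOn_range_order _ _ hs
    isSolution_sRecurrence_four_pow_mul_oddBinomSum).2 fun n hn => by
      simp only [sRecurrence, coe_range, Set.mem_Iio] at hn
      interval_cases n <;> simp [h0, h1, h2, oddBinomSum, sum_range_succ, Nat.choose]
  intro n
  rw [← oddBinomSum_eq_sum_range (3 : ℤ) (by omega)]
  exact congrFun heq n
end

section
/- Let g : ℕ × ℤ → ℤ satisfy g(n,i)=0 for i<0, the initial table g(0,0)=2, g(0,1)=2, g(1,1)=40, g(1,2)=24, g(2,1)=48, g(2,2)=720, g(2,3)=256 (and g(n,i)=0 for all other pairs with n≤2), and the recurrence g(n,i) = 20g(n-1,i-1) + 24g(n-2,i-1) - 64g(n-2,i-2) - 384g(n-3,i-3) for n≥3. Then for every n≥0: g(n,i)=0 whenever i > n+1 or i < ⌊(n+1)/2⌋, and g(n,i) > 0 whenever ⌊(n+1)/2⌋ ≤ i ≤ n+1. -/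
/-!
The recurrence turns `excess g n i = g(n+2, i) - 8 g(n+1, i-1) - 32 g(n, i-2)` into
`excess g (n+1) i = 12 excess g n (i-1) + 24 g(n+1, i-1)`, so while the rows are nonnegative
the excess stays nonnegative, i.e. `g(n+3, i) ≥ 8 g(n+2, i-1) + 24 g(n+1, i-1)`. Hence row
`n+3` is positive wherever row `n+2` or row `n+1` is positive one step to the left, and these
two shifted supports cover `[⌊(n+4)/2⌋, n+4]`; outside it every term of the recurrence vanishes.
-/

namespace IteratedClaw

/-- The interval `[⌊(n+1)/2⌋, n+1]` of genera in which the `n`-th iterated claw embeds. -/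
def rowSupport (n : ℕ) : Set ℤ := Set.Icc (((n : ℤ) + 1) / 2) ((n : ℤ) + 1)

lemma mem_rowSupport {n : ℕ} {i : ℤ} :
    i ∈ rowSupport n ↔ ((n : ℤ) + 1) / 2 ≤ i ∧ i ≤ (n : ℤ) + 1 := Iff.rfl

def HasRowSupport (g : ℕ × ℤ → ℤ) (n : ℕ) : Prop :=
  (∀ i ∈ rowSupport n, 0 < g (n, i)) ∧ ∀ i ∉ rowSupport n, g (n, i) = 0

def excess (g : ℕ × ℤ → ℤ) (n : ℕ) (i : ℤ) : ℤ :=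
  g (n + 2, i) - 8 * g (n + 1, i - 1) - 32 * g (n, i - 2)

lemma HasRowSupport.nonneg {g : ℕ × ℤ → ℤ} {n : ℕ} (h : HasRowSupport g n) (i : ℤ) :
    0 ≤ g (n, i) := by
  by_cases hi : i ∈ rowSupport n
  · exact (h.1 i hi).le
  · exact (h.2 i hi).ge

section Recurrence

variable {g : ℕ × ℤ → ℤ}
  (hrec : ∀ n : ℕ, ∀ i : ℤ, g (n + 3, i) =
    20 * g (n + 2, i - 1) + 24 * g (n + 1, i - 1) - 64 * g (n + 1, i - 2) - 384 * g (n, i - 3))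
include hrec

lemma excess_succ (n : ℕ) (i : ℤ) :
    excess g (n + 1) i = 12 * excess g n (i - 1) + 24 * g (n + 1, i - 1) := by
  simp only [excess, hrec n i, show i - 1 - 1 = i - 2 by ring, show i - 1 - 2 = i - 3 by ring]
  ring

lemma excess_succ_nonneg {n : ℕ} (h₁ : ∀ i, 0 ≤ g (n + 1, i)) (he : ∀ i, 0 ≤ excess g n i)
    (i : ℤ) : 0 ≤ excess g (n + 1) i := by
  rw [excess_succ hrec]
  linarith [he (i - 1), h₁ (i - 1)]

lemma le_apply_add_three {n : ℕ} (h₁ : ∀ i, 0 ≤ g (n + 1, i)) (he : ∀ i, 0 ≤ excess g n i)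
    (i : ℤ) : 8 * g (n + 2, i - 1) + 24 * g (n + 1, i - 1) ≤ g (n + 3, i) := by
  have key := excess_succ hrec n i
  have hD := he (i - 1)
  simp only [excess, Nat.add_assoc, Nat.reduceAdd, sub_sub, Int.reduceAdd] at key hD
  linarith [h₁ (i - 2)]

lemma hasRowSupport_add_three {n : ℕ} (h₀ : HasRowSupport g n) (h₁ : HasRowSupport g (n + 1))
    (h₂ : HasRowSupport g (n + 2)) (he : ∀ i, 0 ≤ excess g n i) :
    HasRowSupport g (n + 3) := by
  refine ⟨fun i hi => ?_, fun i hi => ?_⟩ <;> rw [mem_rowSupport] at hi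
  · have lower := le_apply_add_three hrec h₁.nonneg he i
    by_cases hleft : ((n : ℤ) + 3) / 2 ≤ i - 1
    · linarith [h₂.1 (i - 1) (by rw [mem_rowSupport]; omega), h₁.nonneg (i - 1)]
    · linarith [h₁.1 (i - 1) (by rw [mem_rowSupport]; omega), h₂.nonneg (i - 1)]
  · rw [hrec, h₂.2 (i - 1) (by rw [mem_rowSupport]; omega),
      h₁.2 (i - 1) (by rw [mem_rowSupport]; omega),
      h₁.2 (i - 2) (by rw [mem_rowSupport]; omega),
      h₀.2 (i - 3) (by rw [mem_rowSupport]; omega)]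
    norm_num

lemma hasRowSupport_of_initial (h₀ : HasRowSupport g 0) (h₁ : HasRowSupport g 1)
    (h₂ : HasRowSupport g 2) (he : ∀ i, 0 ≤ excess g 0 i) (n : ℕ) : HasRowSupport g n := by
  suffices ∀ n, HasRowSupport g n ∧ HasRowSupport g (n + 1) ∧ HasRowSupport g (n + 2) ∧
      ∀ i, 0 ≤ excess g n i from (this n).1
  intro n
  induction n with
  | zero => exact ⟨h₀, h₁, h₂, he⟩
  | succ n ih =>
    obtain ⟨r₀, r₁, r₂, e⟩ := ih
    exact ⟨r₁, r₂, hasRowSupport_add_three hrec r₀ r₁ r₂ e, excess_succ_nonneg hrec r₁.nonneg e⟩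

end Recurrence

end IteratedClaw

open IteratedClaw in
theorem stmt4_general (g : ℕ × ℤ → ℤ)
    (h00 : g (0, 0) = 2) (h01 : g (0, 1) = 2)
    (h11 : g (1, 1) = 40) (h12 : g (1, 2) = 24)
    (h21 : g (2, 1) = 48) (h22 : g (2, 2) = 720) (h23 : g (2, 3) = 256)
    (hzero : ∀ n : ℕ, ∀ i : ℤ, n ≤ 2 →
      (n, i) ∉ ({(0, 0), (0, 1), (1, 1), (1, 2), (2, 1), (2, 2), (2, 3)} : Set (ℕ × ℤ)) →
      g (n, i) = 0)
    (hrec : ∀ n : ℕ, ∀ i : ℤ, g (n + 3, i) =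
      20 * g (n + 2, i - 1) + 24 * g (n + 1, i - 1) - 64 * g (n + 1, i - 2)
        - 384 * g (n, i - 3)) :
    ∀ n : ℕ, ∀ i : ℤ,
      ((i > (n : ℤ) + 1 ∨ i < ((n : ℤ) + 1) / 2) → g (n, i) = 0) ∧
      ((((n : ℤ) + 1) / 2 ≤ i ∧ i ≤ (n : ℤ) + 1) → 0 < g (n, i)) := by
  have row₀ : HasRowSupport g 0 := by
    refine ⟨fun i hi => ?_, fun i hi => hzero 0 i (by norm_num) ?_⟩
    · obtain rfl | rfl : i = 0 ∨ i = 1 := by rw [mem_rowSupport] at hi; omega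
      all_goals simp [h00, h01]
    · rw [mem_rowSupport] at hi
      simp only [Set.mem_insert_iff, Set.mem_singleton_iff, Prod.mk.injEq]
      omega
  have row₁ : HasRowSupport g 1 := by
    refine ⟨fun i hi => ?_, fun i hi => hzero 1 i (by norm_num) ?_⟩
    · obtain rfl | rfl : i = 1 ∨ i = 2 := by rw [mem_rowSupport] at hi; omega
      all_goals simp [h11, h12]
    · rw [mem_rowSupport] at hi
      simp only [Set.mem_insert_iff, Set.mem_singleton_iff, Prod.mk.injEq]
      omega
  have row₂ : HasRowSupport g 2 := by
    refine ⟨fun i hi => ?_, fun i hi => hzero 2 i (by norm_num) ?_⟩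
    · obtain rfl | rfl | rfl : i = 1 ∨ i = 2 ∨ i = 3 := by rw [mem_rowSupport] at hi; omega
      all_goals simp [h21, h22, h23]
    · rw [mem_rowSupport] at hi
      simp only [Set.mem_insert_iff, Set.mem_singleton_iff, Prod.mk.injEq]
      omega
  have excess₀ : ∀ i, 0 ≤ excess g 0 i := by
    intro i
    by_cases hi : i = 1 ∨ i = 2 ∨ i = 3
    · have z₁ : g (1, 0) = 0 := row₁.2 0 (by simp [rowSupport])
      have z₀ : g (0, -1) = 0 := row₀.2 (-1) (by simp [rowSupport])
      rcases hi with rfl | rfl | rfl <;>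
        norm_num [excess, h00, h01, h11, h12, h21, h22, h23, z₀, z₁]
    · rw [excess, row₂.2 i (by rw [mem_rowSupport]; omega),
        row₁.2 (i - 1) (by rw [mem_rowSupport]; omega),
        row₀.2 (i - 2) (by rw [mem_rowSupport]; omega)]
      norm_num
  intro n i
  have := hasRowSupport_of_initial hrec row₀ row₁ row₂ excess₀ n
  exact ⟨fun h => this.2 i (by rw [mem_rowSupport]; omega), fun h => this.1 i h⟩

theorem stmt4 (g : ℕ × ℤ → ℤ)
    (hneg : ∀ n : ℕ, ∀ i : ℤ, i < 0 → g (n, i) = 0)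
    (h00 : g (0, 0) = 2) (h01 : g (0, 1) = 2)
    (h11 : g (1, 1) = 40) (h12 : g (1, 2) = 24)
    (h21 : g (2, 1) = 48) (h22 : g (2, 2) = 720) (h23 : g (2, 3) = 256)
    (hzero : ∀ n : ℕ, ∀ i : ℤ, n ≤ 2 →
      (n, i) ∉ ({(0, 0), (0, 1), (1, 1), (1, 2), (2, 1), (2, 2), (2, 3)} : Set (ℕ × ℤ)) →
      g (n, i) = 0)
    (hrec : ∀ n : ℕ, ∀ i : ℤ, g (n + 3, i) =
      20 * g (n + 2, i - 1) + 24 * g (n + 1, i - 1) - 64 * g (n + 1, i - 2)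
        - 384 * g (n, i - 3)) :
    ∀ n : ℕ, ∀ i : ℤ,
      ((i > (n : ℤ) + 1 ∨ i < ((n : ℤ) + 1) / 2) → g (n, i) = 0) ∧
      ((((n : ℤ) + 1) / 2 ≤ i ∧ i ≤ (n : ℤ) + 1) → 0 < g (n, i)) :=
  stmt4_general g h00 h01 h11 h12 h21 h22 h23 hzero hrec
end

section
/- Let g : ℕ × ℤ → ℤ be as defined by the iterated-claw recurrence g(n,i) = 20g(n-1,i-1) + 24g(n-2,i-1) - 64g(n-2,i-2) - 384g(n-3,i-3) for n≥3 with the initial values g(0,0)=2, g(0,1)=2, g(1,1)=40, g(1,2)=24, g(2,1)=48, g(2,2)=720, g(2,3)=256 and g vanishing elsewhere for n≤2 and for i<0. Then for every n≥1 and every i with ⌊(n+1)/2⌋ + 1 ≤ i ≤ n, we have g(n,i) > 11·g(n-1,i-1). -/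
/-!
The table is supported on the band `n ≤ 2 i ≤ 2 n + 2`. On the lower edge of the band the
recurrence collapses to `g (2m+2, m+1) = 24 g (2m, m)` and
`g (2m+3, m+2) = 20 g (2m+2, m+1) + 24 g (2m+1, m+1)`, on the upper edge to
`g (n+2, n+3) = 8 g (n+1, n+2) + 32 g (n, n+1)`; hence both edges are positive and
`g (2m+1, m+1) ≥ 20 g (2m, m)`.

Inside the band write `a, b, c` for the cells `(n+2, i+2), (n+1, i+1), (n, i)` on one diagonal.
If `a > 11 b` and `b > 11 c ≥ 0`, then
`g (n+3, i+3) - 11 a ≥ 9 a - 64 b - 384 c > 35 b - 384 c > 0`;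
next to the lower edge one of the two growth hypotheses is replaced by the edge inequality.
Growth and nonnegativity of the rows are then proved together by induction on the row.
-/

structure IsClawTable (g : ℕ × ℤ → ℤ) : Prop where
  g00 : g (0, 0) = 2
  g01 : g (0, 1) = 2
  g11 : g (1, 1) = 40
  g12 : g (1, 2) = 24
  g21 : g (2, 1) = 48
  g22 : g (2, 2) = 720
  g23 : g (2, 3) = 256
  eq_zero : ∀ n : ℕ, ∀ i : ℤ, n ≤ 2 →
    (n, i) ∉ ({(0, 0), (0, 1), (1, 1), (1, 2), (2, 1), (2, 2), (2, 3)} : Set (ℕ × ℤ)) →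
    g (n, i) = 0
  recurrence : ∀ n : ℕ, ∀ i : ℤ, g (n + 3, i + 3) =
    20 * g (n + 2, i + 2) + 24 * g (n + 1, i + 2) - 64 * g (n + 1, i + 1) - 384 * g (n, i)

def RowNonneg (g : ℕ × ℤ → ℤ) (n : ℕ) : Prop := ∀ i, 0 ≤ g (n, i)

def RowGrowth (g : ℕ × ℤ → ℤ) (n : ℕ) : Prop :=
  ∀ i : ℤ, (n : ℤ) + 1 ≤ 2 * i → i ≤ n → 11 * g (n, i) < g (n + 1, i + 1)

namespace IsClawTable

variable {g : ℕ × ℤ → ℤ}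

theorem eq_zero_of_le_two (hg : IsClawTable g) {n : ℕ} {i : ℤ} (hn : n ≤ 2)
    (hi : 2 * i < n ∨ (n : ℤ) + 1 < i) : g (n, i) = 0 := by
  refine hg.eq_zero n i hn ?_
  simp only [Set.mem_insert_iff, Set.mem_singleton_iff, Prod.mk.injEq]
  omega

theorem eq_zero_of_two_mul_lt_or_lt (hg : IsClawTable g) {n : ℕ} {i : ℤ}
    (h : 2 * i < n ∨ (n : ℤ) + 1 < i) : g (n, i) = 0 := by
  induction n using Nat.strong_induction_on generalizing i with
  | _ n ih =>
  rcases le_or_gt n 2 with hn | hn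
  · exact hg.eq_zero_of_le_two hn h
  obtain ⟨k, rfl⟩ : ∃ k, n = k + 3 := ⟨n - 3, by omega⟩
  obtain ⟨j, rfl⟩ : ∃ j, i = j + 3 := ⟨i - 3, by ring⟩
  push_cast at h
  rw [hg.recurrence, ih (k + 2) (by omega) (by push_cast; omega),
    ih (k + 1) (by omega) (by push_cast; omega), ih (k + 1) (by omega) (by push_cast; omega),
    ih k (by omega) (by omega)]
  ring

theorem lower_edge_pos (hg : IsClawTable g) {n : ℕ} {i : ℤ} (h₁ : (n : ℤ) ≤ 2 * i)
    (h₂ : 2 * i ≤ n + 1) : 0 < g (n, i) := by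
  induction n using Nat.strong_induction_on generalizing i with
  | _ n ih =>
  rcases le_or_gt n 2 with hn | hn
  · interval_cases n
    · obtain rfl : i = 0 := by omega
      simp [hg.g00]
    · obtain rfl : i = 1 := by omega
      simp [hg.g11]
    · obtain rfl : i = 1 := by omega
      simp [hg.g21]
  obtain ⟨k, rfl⟩ : ∃ k, n = k + 3 := ⟨n - 3, by omega⟩
  obtain ⟨j, rfl⟩ : ∃ j, i = j + 3 := ⟨i - 3, by ring⟩
  push_cast at h₁ h₂
  rw [hg.recurrence,
    hg.eq_zero_of_two_mul_lt_or_lt (n := k + 1) (i := j + 1) (by push_cast; omega),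
    hg.eq_zero_of_two_mul_lt_or_lt (n := k) (i := j) (by omega)]
  have hb : 0 < g (k + 1, j + 2) :=
    ih (k + 1) (by omega) (by push_cast; omega) (by push_cast; omega)
  have ha : 0 ≤ g (k + 2, j + 2) := by
    rcases lt_or_ge (2 * (j + 2)) ((k + 2 : ℕ) : ℤ) with h | h
    · exact (hg.eq_zero_of_two_mul_lt_or_lt (.inl h)).ge
    · exact (ih (k + 2) (by omega) h (by push_cast; omega)).le
  linarith

theorem lower_edge_growth (hg : IsClawTable g) {n : ℕ} {i : ℤ} (h : 2 * i = n) :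
    20 * g (n, i) ≤ g (n + 1, i + 1) := by
  rcases n with _ | _ | k
  · obtain rfl : i = 0 := by omega
    simp [hg.g00, hg.g11]
  · omega
  obtain ⟨j, rfl⟩ : ∃ j, i = j + 2 := ⟨i - 2, by ring⟩
  push_cast at h
  simp only [add_assoc, Nat.reduceAdd, Int.reduceAdd]
  rw [hg.recurrence,
    hg.eq_zero_of_two_mul_lt_or_lt (n := k + 1) (i := j + 1) (by push_cast; omega),
    hg.eq_zero_of_two_mul_lt_or_lt (n := k) (i := j) (by omega)]
  have := hg.lower_edge_pos (n := k + 1) (i := j + 2) (by push_cast; omega) (by push_cast; omega)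
  linarith

theorem top_edge_recurrence (hg : IsClawTable g) {n : ℕ} {i : ℤ} (h : i = n + 1) :
    g (n + 2, i + 2) = 8 * g (n + 1, i + 1) + 32 * g (n, i) := by
  induction n generalizing i with
  | zero =>
    subst h
    norm_num [hg.g01, hg.g12, hg.g23]
  | succ k ih =>
    obtain ⟨j, rfl⟩ : ∃ j, i = j + 1 := ⟨i - 1, by ring⟩
    push_cast at h
    simp only [add_assoc, Nat.reduceAdd, Int.reduceAdd]
    rw [hg.recurrence,
      hg.eq_zero_of_two_mul_lt_or_lt (n := k + 1) (i := j + 2) (by push_cast; omega),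
      ih (by omega)]
    ring

theorem top_edge_pos (hg : IsClawTable g) : ∀ {n : ℕ} {i : ℤ}, i = n + 1 → 0 < g (n, i)
  | 0, _, rfl => by simp [hg.g01]
  | 1, _, rfl => by norm_num [hg.g12]
  | n + 2, i, h => by
    obtain ⟨j, rfl⟩ : ∃ j, i = j + 2 := ⟨i - 2, by ring⟩
    push_cast at h
    rw [hg.top_edge_recurrence (by omega : j = n + 1)]
    have := hg.top_edge_pos (n := n) (i := j) (by omega)
    have := hg.top_edge_pos (n := n + 1) (i := j + 1) (by push_cast; omega)
    linarith

theorem nonneg_of_not_interior (hg : IsClawTable g) {n : ℕ} {i : ℤ}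
    (h : 2 * i < n + 2 ∨ (n : ℤ) < i) : 0 ≤ g (n, i) := by
  by_cases hout : 2 * i < n ∨ (n : ℤ) + 1 < i
  · exact (hg.eq_zero_of_two_mul_lt_or_lt hout).ge
  obtain ⟨h₁, h₂⟩ | h : (n : ℤ) ≤ 2 * i ∧ 2 * i ≤ n + 1 ∨ i = n + 1 := by omega
  · exact (hg.lower_edge_pos h₁ h₂).le
  · exact (hg.top_edge_pos h).le

theorem rowNonneg_succ (hg : IsClawTable g) {n : ℕ} (hnonneg : RowNonneg g n)
    (hgrowth : RowGrowth g n) : RowNonneg g (n + 1) := by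
  intro i
  by_cases hi : (n : ℤ) + 3 ≤ 2 * i ∧ i ≤ n + 1
  · have := hgrowth (i - 1) (by omega) (by omega)
    rw [sub_add_cancel] at this
    linarith [hnonneg (i - 1)]
  · exact hg.nonneg_of_not_interior (by push_cast; omega)

theorem rowGrowth_add_two (hg : IsClawTable g) {k : ℕ} (h₀ : RowGrowth g k)
    (h₁ : RowGrowth g (k + 1)) (hn₀ : RowNonneg g k) (hn₁ : RowNonneg g (k + 1)) :
    RowGrowth g (k + 2) := by
  intro i hi₁ hi₂
  obtain ⟨j, rfl⟩ : ∃ j, i = j + 2 := ⟨i - 2, by ring⟩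
  push_cast at hi₁ hi₂
  simp only [add_assoc, Nat.reduceAdd, Int.reduceAdd]
  rw [hg.recurrence]
  have hb' := hn₁ (j + 2)
  have hc := hn₀ j
  obtain hj | hj : 2 * j + 1 = k ∨ (k : ℤ) ≤ 2 * j := by omega
  · have ha : 20 * g (k + 1, j + 1) ≤ g (k + 2, j + 2) := by
      simpa only [add_assoc, Nat.reduceAdd, Int.reduceAdd] using
        hg.lower_edge_growth (n := k + 1) (i := j + 1) (by push_cast; omega)
    have hb := hg.lower_edge_pos (n := k + 1) (i := j + 1) (by push_cast; omega)
      (by push_cast; omega)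
    rw [hg.eq_zero_of_two_mul_lt_or_lt (n := k) (i := j) (by omega)]
    linarith
  · have ha : 11 * g (k + 1, j + 1) < g (k + 2, j + 2) := by
      simpa only [add_assoc, Nat.reduceAdd, Int.reduceAdd] using
        h₁ (j + 1) (by push_cast; omega) (by push_cast; omega)
    have hb : 384 * g (k, j) ≤ 35 * g (k + 1, j + 1) := by
      rcases hj.lt_or_eq with hj | hj
      · linarith [h₀ j (by omega) (by omega)]
      · linarith [hg.lower_edge_growth hj.symm]
    linarith

theorem rowNonneg_and_rowGrowth (hg : IsClawTable g) : ∀ n, RowNonneg g n ∧ RowGrowth g n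
  | 0 => ⟨fun _ => hg.nonneg_of_not_interior (by push_cast; omega), fun _ _ _ => by omega⟩
  | 1 =>
    have h₀ := hg.rowNonneg_and_rowGrowth 0
    ⟨hg.rowNonneg_succ h₀.1 h₀.2, fun i hi₁ hi₂ => by
      obtain rfl : i = 1 := by push_cast at hi₁ hi₂; omega
      norm_num [hg.g11, hg.g22]⟩
  | k + 2 =>
    have h₀ := hg.rowNonneg_and_rowGrowth k
    have h₁ := hg.rowNonneg_and_rowGrowth (k + 1)
    ⟨hg.rowNonneg_succ h₁.1 h₁.2, hg.rowGrowth_add_two h₀.2 h₁.2 h₀.1 h₁.1⟩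

end IsClawTable

theorem stmt5_general (g : ℕ × ℤ → ℤ)
    (h00 : g (0, 0) = 2) (h01 : g (0, 1) = 2)
    (h11 : g (1, 1) = 40) (h12 : g (1, 2) = 24)
    (h21 : g (2, 1) = 48) (h22 : g (2, 2) = 720) (h23 : g (2, 3) = 256)
    (hzero : ∀ n : ℕ, ∀ i : ℤ, n ≤ 2 →
      (n, i) ∉ ({(0, 0), (0, 1), (1, 1), (1, 2), (2, 1), (2, 2), (2, 3)} : Set (ℕ × ℤ)) →
      g (n, i) = 0)
    (hrec : ∀ n : ℕ, ∀ i : ℤ, g (n + 3, i) =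
      20 * g (n + 2, i - 1) + 24 * g (n + 1, i - 1) - 64 * g (n + 1, i - 2)
        - 384 * g (n, i - 3)) :
    ∀ n : ℕ, 1 ≤ n → ∀ i : ℤ,
      ((n : ℤ) + 1) / 2 + 1 ≤ i → i ≤ (n : ℤ) →
      11 * g (n - 1, i - 1) < g (n, i) := by
  have hg : IsClawTable g :=
    { g00 := h00, g01 := h01, g11 := h11, g12 := h12, g21 := h21, g22 := h22, g23 := h23
      eq_zero := hzero
      recurrence := fun n i => by
        rw [hrec, show i + 3 - 1 = i + 2 by ring, show i + 3 - 2 = i + 1 by ring,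
          add_sub_cancel_right] }
  intro n hn i hi₁ hi₂
  obtain ⟨m, rfl⟩ : ∃ m, n = m + 1 := ⟨n - 1, by omega⟩
  simpa using (hg.rowNonneg_and_rowGrowth m).2 (i - 1) (by push_cast at hi₁; omega) (by omega)

theorem stmt5 (g : ℕ × ℤ → ℤ)
    (hneg : ∀ n : ℕ, ∀ i : ℤ, i < 0 → g (n, i) = 0)
    (h00 : g (0, 0) = 2) (h01 : g (0, 1) = 2)
    (h11 : g (1, 1) = 40) (h12 : g (1, 2) = 24)
    (h21 : g (2, 1) = 48) (h22 : g (2, 2) = 720) (h23 : g (2, 3) = 256)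
    (hzero : ∀ n : ℕ, ∀ i : ℤ, n ≤ 2 →
      (n, i) ∉ ({(0, 0), (0, 1), (1, 1), (1, 2), (2, 1), (2, 2), (2, 3)} : Set (ℕ × ℤ)) →
      g (n, i) = 0)
    (hrec : ∀ n : ℕ, ∀ i : ℤ, g (n + 3, i) =
      20 * g (n + 2, i - 1) + 24 * g (n + 1, i - 1) - 64 * g (n + 1, i - 2)
        - 384 * g (n, i - 3)) :
    ∀ n : ℕ, 1 ≤ n → ∀ i : ℤ,
      ((n : ℤ) + 1) / 2 + 1 ≤ i → i ≤ (n : ℤ) →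
      11 * g (n - 1, i - 1) < g (n, i) :=
  stmt5_general g h00 h01 h11 h12 h21 h22 h23 hzero hrec
end

section
/- Let g : ℕ × ℤ → ℤ be the iterated-claw coefficient function defined by the recurrence g(n,i) = 20g(n-1,i-1) + 24g(n-2,i-1) - 64g(n-2,i-2) - 384g(n-3,i-3) (n≥3) with the initial values g(0,0)=2, g(0,1)=2, g(1,1)=40, g(1,2)=24, g(2,1)=48, g(2,2)=720, g(2,3)=256 and g=0 elsewhere for n≤2 and for i<0. Then for each n, the leading coefficient satisfies g(n, n+1) = 4^n · Σ_{k=0}^{⌊(n+1)/2⌋} C(n+2, 2k+1) · 3^k. -/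
/-!
Since `g (n, i) = 0` for `i > n + 1`, on the line `i = n + 1` the term
`24 g(n+1, i-1)` of the recurrence drops out, and `aₙ = g(n, n+1)` satisfies
`aₙ₊₃ = 20 aₙ₊₂ - 64 aₙ₊₁ - 384 aₙ`, with characteristic polynomial
`x³ - 20x² + 64x + 384 = (x - 12)(x² - 8x - 32)`. The sum `Oₘ = ∑ C(m, 2k+1) 3ᵏ` is the
`√3`-coefficient of `(1 + √3)ᵐ`, so `Oₘ₊₂ = 2 Oₘ₊₁ + 2 Oₘ` and `4ⁿ Oₙ₊₂` is annihilated by the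
quadratic factor. Both sequences solve the cubic recurrence and agree for `n = 0, 1, 2`.
-/

open Finset

def oddChooseSum (m : ℕ) : ℤ := ∑ k ∈ range (m + 1), (m.choose (2 * k + 1) : ℤ) * 3 ^ k

def evenChooseSum (m : ℕ) : ℤ := ∑ k ∈ range (m + 1), (m.choose (2 * k) : ℤ) * 3 ^ k

lemma oddChooseSum_eq_sum_range {m N : ℕ} (h : m < 2 * N + 1) :
    oddChooseSum m = ∑ k ∈ range N, (m.choose (2 * k + 1) : ℤ) * 3 ^ k := by
  have hvanish : ∀ k ≥ (m + 1) / 2, (m.choose (2 * k + 1) : ℤ) * 3 ^ k = 0 := fun k hk => by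
    rw [Nat.choose_eq_zero_of_lt (by omega), Nat.cast_zero, zero_mul]
  exact (eventually_constant_sum hvanish (by omega)).trans
    (eventually_constant_sum hvanish (by omega)).symm

lemma evenChooseSum_eq_sum_range {m N : ℕ} (h : m < 2 * N) :
    evenChooseSum m = ∑ k ∈ range N, (m.choose (2 * k) : ℤ) * 3 ^ k := by
  have hvanish : ∀ k ≥ m / 2 + 1, (m.choose (2 * k) : ℤ) * 3 ^ k = 0 := fun k hk => by
    rw [Nat.choose_eq_zero_of_lt (by omega), Nat.cast_zero, zero_mul]
  exact (eventually_constant_sum hvanish (by omega)).trans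
    (eventually_constant_sum hvanish (by omega)).symm

lemma oddChooseSum_succ (m : ℕ) : oddChooseSum (m + 1) = evenChooseSum m + oddChooseSum m := by
  rw [oddChooseSum_eq_sum_range (N := m + 1) (by omega), evenChooseSum, oddChooseSum,
    ← sum_add_distrib]
  refine sum_congr rfl fun k _ => ?_
  rw [Nat.choose_succ_succ', Nat.cast_add, add_mul]

lemma evenChooseSum_succ (m : ℕ) :
    evenChooseSum (m + 1) = evenChooseSum m + 3 * oddChooseSum m := by
  rw [evenChooseSum, evenChooseSum_eq_sum_range (N := m + 2) (by omega),
    sum_range_succ' _ (m + 1), sum_range_succ' (fun k => (m.choose (2 * k) : ℤ) * 3 ^ k),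
    oddChooseSum, mul_sum, add_right_comm, ← sum_add_distrib]
  congr 1
  · refine sum_congr rfl fun k _ => ?_
    rw [show 2 * (k + 1) = 2 * k + 1 + 1 by ring, Nat.choose_succ_succ']
    push_cast
    ring
  · simp

lemma oddChooseSum_add_two (m : ℕ) :
    oddChooseSum (m + 2) = 2 * oddChooseSum (m + 1) + 2 * oddChooseSum m := by
  have h₁ := oddChooseSum_succ (m + 1)
  have h₂ := evenChooseSum_succ m
  have h₃ := oddChooseSum_succ m
  linarith

def diagonalRecurrence : LinearRecurrence ℤ := ⟨3, ![-384, -64, 20]⟩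

lemma diagonalRecurrence_isSolution_iff (u : ℕ → ℤ) :
    diagonalRecurrence.IsSolution u ↔
      ∀ n, u (n + 3) = 20 * u (n + 2) - 64 * u (n + 1) - 384 * u n := by
  refine forall_congr' fun n => ?_
  show u (n + 3) = ∑ i : Fin 3, ![(-384 : ℤ), -64, 20] i * u (n + i) ↔ _
  simp only [Fin.sum_univ_three, Matrix.cons_val_zero, Matrix.cons_val_one, Matrix.cons_val_two,
    Matrix.head_cons, Matrix.tail_cons, Fin.val_zero, Fin.val_one, Fin.val_two, add_zero]
  constructor <;> intro h <;> linarith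

lemma isSolution_four_pow_mul_oddChooseSum :
    diagonalRecurrence.IsSolution fun n => 4 ^ n * oddChooseSum (n + 2) := by
  rw [diagonalRecurrence_isSolution_iff]
  intro n
  linear_combination
    4 ^ n * (64 * oddChooseSum_add_two (n + 3) - 192 * oddChooseSum_add_two (n + 2))

section Diagonal

variable {g : ℕ × ℤ → ℤ}
  (hrec : ∀ n : ℕ, ∀ i : ℤ, g (n + 3, i) =
    20 * g (n + 2, i - 1) + 24 * g (n + 1, i - 1) - 64 * g (n + 1, i - 2) - 384 * g (n, i - 3))
include hrec

lemma eq_zero_of_add_one_lt (hinit : ∀ n : ℕ, n ≤ 2 → ∀ i : ℤ, (n : ℤ) + 1 < i → g (n, i) = 0) :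
    ∀ n : ℕ, ∀ i : ℤ, (n : ℤ) + 1 < i → g (n, i) = 0 := by
  intro n
  induction n using Nat.strong_induction_on with
  | _ n ih =>
    intro i hi
    rcases Nat.lt_or_ge n 3 with hn | hn
    · exact hinit n (by omega) i hi
    obtain ⟨n, rfl⟩ := Nat.exists_eq_add_of_le' hn
    push_cast at hi
    rw [hrec n i, ih (n + 2) (by omega) (i - 1) (by push_cast; omega),
      ih (n + 1) (by omega) (i - 1) (by push_cast; omega),
      ih (n + 1) (by omega) (i - 2) (by push_cast; omega),
      ih n (by omega) (i - 3) (by omega)]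
    ring

lemma isSolution_diagonal (hinit : ∀ n : ℕ, n ≤ 2 → ∀ i : ℤ, (n : ℤ) + 1 < i → g (n, i) = 0) :
    diagonalRecurrence.IsSolution fun n => g (n, n + 1) := by
  rw [diagonalRecurrence_isSolution_iff]
  intro n
  have hstep : g (n + 3, n + 3 + 1) = 20 * g (n + 2, n + 2 + 1) + 24 * g (n + 1, n + 2 + 1)
      - 64 * g (n + 1, n + 1 + 1) - 384 * g (n, n + 1) := by
    rw [hrec]
    ring_nf
  have hcorner : g (n + 1, n + 2 + 1) = 0 :=
    eq_zero_of_add_one_lt hrec hinit (n + 1) (n + 2 + 1) (by push_cast; omega)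
  push_cast
  rw [hstep, hcorner]
  ring

end Diagonal

theorem stmt6_general (g : ℕ × ℤ → ℤ)
    (h01 : g (0, 1) = 2)
    (h12 : g (1, 2) = 24)
    (h23 : g (2, 3) = 256)
    (hzero : ∀ n : ℕ, ∀ i : ℤ, n ≤ 2 →
      (n, i) ∉ ({(0, 0), (0, 1), (1, 1), (1, 2), (2, 1), (2, 2), (2, 3)} : Set (ℕ × ℤ)) →
      g (n, i) = 0)
    (hrec : ∀ n : ℕ, ∀ i : ℤ, g (n + 3, i) =
      20 * g (n + 2, i - 1) + 24 * g (n + 1, i - 1) - 64 * g (n + 1, i - 2)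
        - 384 * g (n, i - 3)) :
    ∀ n : ℕ, g (n, (n : ℤ) + 1) = 4 ^ n *
      ∑ k ∈ Finset.range ((n + 1) / 2 + 1), ((n + 2).choose (2 * k + 1) : ℤ) * 3 ^ k := by
  have hinit : ∀ n : ℕ, n ≤ 2 → ∀ i : ℤ, (n : ℤ) + 1 < i → g (n, i) = 0 := by
    intro n hn i hi
    refine hzero n i hn ?_
    simp only [Set.mem_insert_iff, Prod.mk.injEq, Set.mem_singleton_iff, not_or, not_and]
    omega
  have hdiag : (fun n : ℕ => g (n, n + 1)) = fun n => 4 ^ n * oddChooseSum (n + 2) := by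
    refine (diagonalRecurrence.eq_iff_eqOn_range_order _ _ (isSolution_diagonal hrec hinit)
      isSolution_four_pow_mul_oddChooseSum).2 fun k hk => ?_
    have hvalues : oddChooseSum 2 = 2 ∧ oddChooseSum 3 = 6 ∧ oddChooseSum 4 = 16 := by decide
    simp only [diagonalRecurrence, coe_range, Set.mem_Iio] at hk
    interval_cases k <;> simp [h01, h12, h23, hvalues]
  intro n
  rw [← oddChooseSum_eq_sum_range (by omega)]
  exact congrFun hdiag n

theorem stmt6 (g : ℕ × ℤ → ℤ)
    (hneg : ∀ n : ℕ, ∀ i : ℤ, i < 0 → g (n, i) = 0)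
    (h00 : g (0, 0) = 2) (h01 : g (0, 1) = 2)
    (h11 : g (1, 1) = 40) (h12 : g (1, 2) = 24)
    (h21 : g (2, 1) = 48) (h22 : g (2, 2) = 720) (h23 : g (2, 3) = 256)
    (hzero : ∀ n : ℕ, ∀ i : ℤ, n ≤ 2 →
      (n, i) ∉ ({(0, 0), (0, 1), (1, 1), (1, 2), (2, 1), (2, 2), (2, 3)} : Set (ℕ × ℤ)) →
      g (n, i) = 0)
    (hrec : ∀ n : ℕ, ∀ i : ℤ, g (n + 3, i) =
      20 * g (n + 2, i - 1) + 24 * g (n + 1, i - 1) - 64 * g (n + 1, i - 2)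
        - 384 * g (n, i - 3)) :
    ∀ n : ℕ, g (n, (n : ℤ) + 1) = 4 ^ n *
      ∑ k ∈ Finset.range ((n + 1) / 2 + 1), ((n + 2).choose (2 * k + 1) : ℤ) * 3 ^ k :=
  stmt6_general g h01 h12 h23 hzero hrec
end

section
/- Let (Γ_n(z)) be the sequence of real polynomials with Γ_0(z)=2+2z, Γ_1(z)=40z+24z^2, Γ_2(z)=48z+720z^2+256z^3, and Γ_n(z) = 20z·Γ_{n-1}(z) + 8z(3-8z)·Γ_{n-2}(z) - 384z^3·Γ_{n-3}(z) for n≥3. Define W_n(z) = Γ_n(z)/z^{⌊(n+1)/2⌋} (which is a polynomial). Then W_n satisfies: W_n(z) = 20z·W_{n-1}(z) + 8(3-8z)·W_{n-2}(z) - 384z^2·W_{n-3}(z) when n is even, and W_n(z) = 20·W_{n-1}(z) + 8(3-8z)·W_{n-2}(z) - 384z·W_{n-3}(z) when n is odd, with W_0(z)=2(1+z), W_1(z)=8(5+3z), W_2(z)=16(3+45z+16z^2). -/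
/-!
The exponent `⌊(n+1)/2⌋` of `Γ_n, Γ_{n+1}, Γ_{n+2}, Γ_{n+3}` runs `m, m+1, m+1, m+2`
when `n = 2m` and `m+1, m+1, m+2, m+2` when `n = 2m+1`. Dividing the recurrence for `Γ_{n+3}`
by `z^{m+2}` therefore leaves a different power of `z` on each term according to the parity
of `n`, which is exactly the parity-dependent recurrence defining `W`.
-/

open Polynomial

namespace IteratedClaw

variable {R : Type*} [CommRing R]

noncomputable def reducedGenusPoly : ℕ → R[X]
  | 0 => 2 * (1 + X)
  | 1 => 8 * (5 + 3 * X)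
  | 2 => 16 * (3 + 45 * X + 16 * X ^ 2)
  | n + 3 =>
      if Even (n + 3) then
        20 * X * reducedGenusPoly (n + 2) + 8 * (3 - 8 * X) * reducedGenusPoly (n + 1) -
          384 * X ^ 2 * reducedGenusPoly n
      else
        20 * reducedGenusPoly (n + 2) + 8 * (3 - 8 * X) * reducedGenusPoly (n + 1) -
          384 * X * reducedGenusPoly n

theorem reducedGenusPoly_add_three_of_even {n : ℕ} (h : Even (n + 3)) :
    (reducedGenusPoly (n + 3) : R[X]) = 20 * X * reducedGenusPoly (n + 2) +
      8 * (3 - 8 * X) * reducedGenusPoly (n + 1) - 384 * X ^ 2 * reducedGenusPoly n := by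
  rw [reducedGenusPoly, if_pos h]

theorem reducedGenusPoly_add_three_of_odd {n : ℕ} (h : Odd (n + 3)) :
    (reducedGenusPoly (n + 3) : R[X]) = 20 * reducedGenusPoly (n + 2) +
      8 * (3 - 8 * X) * reducedGenusPoly (n + 1) - 384 * X * reducedGenusPoly n := by
  rw [reducedGenusPoly, if_neg (Nat.not_even_iff_odd.mpr h)]

theorem eq_X_pow_mul_reducedGenusPoly (Γ : ℕ → R[X])
    (h0 : Γ 0 = 2 + 2 * X) (h1 : Γ 1 = 40 * X + 24 * X ^ 2)
    (h2 : Γ 2 = 48 * X + 720 * X ^ 2 + 256 * X ^ 3)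
    (hrec : ∀ n, Γ (n + 3) =
      20 * X * Γ (n + 2) + 8 * X * (3 - 8 * X) * Γ (n + 1) - 384 * X ^ 3 * Γ n) :
    ∀ n, Γ n = X ^ ((n + 1) / 2) * reducedGenusPoly n
  | 0 => by rw [h0, reducedGenusPoly]; ring
  | 1 => by rw [h1, reducedGenusPoly]; ring
  | 2 => by rw [h2, reducedGenusPoly]; ring
  | n + 3 => by
    rw [hrec, eq_X_pow_mul_reducedGenusPoly Γ h0 h1 h2 hrec (n + 2),
      eq_X_pow_mul_reducedGenusPoly Γ h0 h1 h2 hrec (n + 1),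
      eq_X_pow_mul_reducedGenusPoly Γ h0 h1 h2 hrec n]
    obtain ⟨m, rfl | rfl⟩ := Nat.even_or_odd' n
    · rw [reducedGenusPoly_add_three_of_odd (n := 2 * m) ⟨m + 1, by ring⟩]
      simp only [show (2 * m + 3 + 1) / 2 = m + 2 by omega,
        show (2 * m + 2 + 1) / 2 = m + 1 by omega,
        show (2 * m + 1 + 1) / 2 = m + 1 by omega, show (2 * m + 1) / 2 = m by omega]
      ring
    · rw [reducedGenusPoly_add_three_of_even (n := 2 * m + 1) ⟨m + 2, by ring⟩]
      simp only [show (2 * m + 1 + 3 + 1) / 2 = m + 2 by omega,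
        show (2 * m + 1 + 2 + 1) / 2 = m + 2 by omega,
        show (2 * m + 1 + 1 + 1) / 2 = m + 1 by omega, show (2 * m + 1 + 1) / 2 = m + 1 by omega]
      ring

end IteratedClaw

open IteratedClaw

theorem stmt7 (Γ : ℕ → Polynomial ℝ)
    (h0 : Γ 0 = 2 + 2 * X) (h1 : Γ 1 = 40 * X + 24 * X ^ 2)
    (h2 : Γ 2 = 48 * X + 720 * X ^ 2 + 256 * X ^ 3)
    (hrec : ∀ n, Γ (n + 3) =
      20 * X * Γ (n + 2) + 8 * X * (3 - 8 * X) * Γ (n + 1) - 384 * X ^ 3 * Γ n) :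
    ∃ W : ℕ → Polynomial ℝ,
      (∀ n, Γ n = X ^ ((n + 1) / 2) * W n) ∧
      W 0 = 2 * (1 + X) ∧ W 1 = 8 * (5 + 3 * X) ∧
      W 2 = 16 * (3 + 45 * X + 16 * X ^ 2) ∧
      (∀ n, (Even (n + 3) → W (n + 3) =
          20 * X * W (n + 2) + 8 * (3 - 8 * X) * W (n + 1) - 384 * X ^ 2 * W n) ∧
        (Odd (n + 3) → W (n + 3) =
          20 * W (n + 2) + 8 * (3 - 8 * X) * W (n + 1) - 384 * X * W n)) :=
  ⟨reducedGenusPoly, eq_X_pow_mul_reducedGenusPoly Γ h0 h1 h2 hrec, rfl, rfl, rfl,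
    fun _ => ⟨reducedGenusPoly_add_three_of_even, reducedGenusPoly_add_three_of_odd⟩⟩
end

section
/- Define polynomials W_n(z) over ℝ by W_0(z)=2(1+z), W_1(z)=8(5+3z), W_2(z)=16(3+45z+16z^2), and for n≥3: W_n(z) = 20z·W_{n-1}(z) + 8(3-8z)·W_{n-2}(z) - 384z^2·W_{n-3}(z) if n is even, and W_n(z) = 20·W_{n-1}(z) + 8(3-8z)·W_{n-2}(z) - 384z·W_{n-3}(z) if n is odd. Then for every n ≥ 0, W_n has exactly ⌈(n+1)/2⌉ roots, all real, distinct, and negative. -/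
open Polynomial


open Polynomial Finset

/-- generic chain monotonicity -/
lemma chainMono {f : ℕ → ℝ} {m : ℕ} (h : ∀ i, i + 1 < m → f i < f (i+1)) :
    ∀ i j, i < j → j < m → f i < f j := by
  intro i j hij hjm
  induction j with
  | zero => omega
  | succ j ih =>
    rcases Nat.lt_or_ge i j with hlt | hge
    · exact (ih hlt (by omega)).trans (h j (by omega))
    · have : i = j := by omega
      subst this; exact h i (by omega)

lemma neg_one_pow_sq (t : ℕ) : ((-1:ℝ)^t) * ((-1:ℝ)^t) = 1 := by
  rw [← pow_add]
  exact Even.neg_one_pow ⟨t, rfl⟩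

lemma prodSign {m j0 : ℕ} (hj : j0 ≤ m) {x : ℝ} {a : ℕ → ℝ}
    (h1 : ∀ i < j0, a i < x) (h2 : ∀ i, j0 ≤ i → i < m → x < a i) :
    0 < (-1:ℝ)^(m - j0) * ∏ i ∈ range m, (x - a i) := by
  have hsplit : (∏ i ∈ Finset.Ico 0 j0, (x - a i)) * ∏ i ∈ Finset.Ico j0 m, (x - a i)
      = ∏ i ∈ range m, (x - a i) := by
    rw [Finset.range_eq_Ico]
    exact Finset.prod_Ico_consecutive _ (Nat.zero_le j0) hj
  have hp1 : 0 < ∏ i ∈ Finset.Ico 0 j0, (x - a i) := by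
    apply Finset.prod_pos
    intro i hi
    simp only [Finset.mem_Ico] at hi
    have := h1 i hi.2
    linarith
  have hp2 : 0 < ∏ i ∈ Finset.Ico j0 m, (a i - x) := by
    apply Finset.prod_pos
    intro i hi
    simp only [Finset.mem_Ico] at hi
    have := h2 i hi.1 hi.2
    linarith
  have hneg : ∏ i ∈ Finset.Ico j0 m, (x - a i)
      = (-1:ℝ)^(m - j0) * ∏ i ∈ Finset.Ico j0 m, (a i - x) := by
    rw [← Nat.card_Ico j0 m, ← Finset.prod_const (-1:ℝ), ← Finset.prod_mul_distrib]
    apply Finset.prod_congr rfl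
    intro i _
    ring
  have key : (-1:ℝ)^(m - j0) * ∏ i ∈ range m, (x - a i)
      = (∏ i ∈ Finset.Ico 0 j0, (x - a i)) *
        (((-1:ℝ)^(m-j0)) * ((-1:ℝ)^(m-j0)) * ∏ i ∈ Finset.Ico j0 m, (a i - x)) := by
    rw [← hsplit, hneg]; ring
  rw [key, neg_one_pow_sq]
  rw [one_mul]
  exact mul_pos hp1 hp2

lemma evalFact (L : ℝ) (m : ℕ) (a : ℕ → ℝ) (x : ℝ) :
    eval x (C L * ∏ i ∈ range m, (X - C (a i))) = L * ∏ i ∈ range m, (x - a i) := by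
  rw [eval_mul, eval_C, eval_prod]
  congr 1
  apply Finset.prod_congr rfl
  intro i _
  simp

lemma factMonic (m : ℕ) (a : ℕ → ℝ) : (∏ i ∈ range m, (X - C (a i))).Monic :=
  monic_prod_of_monic _ _ (fun i _ => monic_X_sub_C (a i))

lemma factProdNatDegree (m : ℕ) (a : ℕ → ℝ) :
    (∏ i ∈ range m, (X - C (a i))).natDegree = m := by
  rw [natDegree_prod_of_monic _ _ (fun i _ => monic_X_sub_C (a i))]
  simp

lemma factNatDegree {L : ℝ} (hL : L ≠ 0) (m : ℕ) (a : ℕ → ℝ) :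
    (C L * ∏ i ∈ range m, (X - C (a i))).natDegree = m := by
  rw [natDegree_C_mul hL, factProdNatDegree]

lemma factCoeffTop {L : ℝ} (hL : L ≠ 0) (m : ℕ) (a : ℕ → ℝ) :
    (C L * ∏ i ∈ range m, (X - C (a i))).coeff m = L := by
  rw [coeff_C_mul]
  have h := factMonic m a
  have h2 := factProdNatDegree m a
  have h3 := h.coeff_natDegree
  rw [h2] at h3
  rw [h3, mul_one]

lemma factCoeffAbove {L : ℝ} (m t : ℕ) (hmt : m < t) (a : ℕ → ℝ) :
    (C L * ∏ i ∈ range m, (X - C (a i))).coeff t = 0 := by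
  apply coeff_eq_zero_of_natDegree_lt
  calc (C L * ∏ i ∈ range m, (X - C (a i))).natDegree
      ≤ (C (L:ℝ)).natDegree + (∏ i ∈ range m, (X - C (a i))).natDegree := natDegree_mul_le
    _ = m := by rw [natDegree_C, factProdNatDegree]; ring
    _ < t := hmt

lemma evalRootFact (L : ℝ) (m j : ℕ) (hj : j < m) (a : ℕ → ℝ) :
    eval (a j) (C L * ∏ i ∈ range m, (X - C (a i))) = 0 := by
  rw [evalFact]
  rw [Finset.prod_eq_zero (Finset.mem_range.mpr hj) (by ring)]
  ring

lemma opp {s : ℕ} {A B : ℝ} (h1 : 0 < (-1:ℝ)^(s+1) * A) (h2 : 0 < (-1:ℝ)^s * B) :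
    A * B < 0 := by
  have hsq := neg_one_pow_sq s
  rw [pow_succ] at h1
  nlinarith [mul_pos h1 h2, hsq]

lemma signComb {t : ℕ} {p1 p2 A B : ℝ} (hp1 : 0 < p1) (hp2 : 0 < p2)
    (hA : 0 < (-1:ℝ)^t * A) (hB : 0 < (-1:ℝ)^t * B) :
    0 < (-1:ℝ)^t * (p1 * A + p2 * B) := by
  have h1 := mul_pos hp1 hA
  have h2 := mul_pos hp2 hB
  nlinarith [h1, h2]

lemma signComb' {t : ℕ} {p1 p2 A B : ℝ} (hp1 : 0 < p1) (hp2 : p2 < 0)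
    (hA : 0 < (-1:ℝ)^(t+1) * A) (hB : 0 < (-1:ℝ)^t * B) :
    0 < (-1:ℝ)^(t+1) * (p1 * A + p2 * B) := by
  have h1 := mul_pos hp1 hA
  have h2 := mul_pos (neg_pos.mpr hp2) hB
  rw [pow_succ] at *
  nlinarith [h1, h2]

lemma signComb2 {t : ℕ} {p1 p2 A B : ℝ} (hp1 : p1 < 0) (hp2 : p2 < 0)
    (hA : 0 < (-1:ℝ)^t * A) (hB : 0 < (-1:ℝ)^t * B) :
    0 < (-1:ℝ)^(t+1) * (p1 * A + p2 * B) := by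
  have h1 := mul_pos (neg_pos.mpr hp1) hA
  have h2 := mul_pos (neg_pos.mpr hp2) hB
  rw [pow_succ]
  nlinarith [h1, h2]

lemma exists_root_between (p : Polynomial ℝ) {l u : ℝ} (hlu : l < u)
    (h : eval l p * eval u p < 0) : ∃ x, l < x ∧ x < u ∧ eval x p = 0 := by
  have hc : ContinuousOn (fun x => eval x p) (Set.Icc l u) :=
    (Polynomial.continuous p).continuousOn
  rcases lt_or_ge (eval l p) 0 with hl | hl
  · have hu : 0 < eval u p := by nlinarith
    have := intermediate_value_Ioo (le_of_lt hlu) hc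
    have h0 : (0:ℝ) ∈ Set.Ioo (eval l p) (eval u p) := ⟨hl, hu⟩
    obtain ⟨x, hx, hx0⟩ := this h0
    exact ⟨x, hx.1, hx.2, hx0⟩
  · have hl' : 0 < eval l p := by
      rcases lt_or_eq_of_le hl with h' | h'
      · exact h'
      · exfalso; rw [← h'] at h; simp at h
    have hu : eval u p < 0 := by nlinarith
    have := intermediate_value_Ioo' (le_of_lt hlu) hc
    have h0 : (0:ℝ) ∈ Set.Ioo (eval u p) (eval l p) := ⟨hu, hl'⟩
    obtain ⟨x, hx, hx0⟩ := this h0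
    exact ⟨x, hx.1, hx.2, hx0⟩

lemma peel (p : Polynomial ℝ) (m : ℕ) (e : ℕ → ℝ)
    (hd : ∀ i j, i < j → j < m → e i ≠ e j)
    (hr : ∀ i < m, eval (e i) p = 0) :
    ∃ q, p = (∏ i ∈ range m, (X - C (e i))) * q := by
  induction m with
  | zero => exact ⟨p, by simp⟩
  | succ m ih =>
    obtain ⟨q, hq⟩ := ih (fun i j hij hj => hd i j hij (by omega))
      (fun i hi => hr i (by omega))
    have hqroot : eval (e m) q = 0 := by
      have := hr m (by omega)
      rw [hq, eval_mul, eval_prod] at this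
      have hne : ∏ i ∈ range m, eval (e m) (X - C (e i)) ≠ 0 := by
        apply Finset.prod_ne_zero_iff.mpr
        intro i hi
        simp only [eval_sub, eval_X, eval_C, sub_ne_zero]
        intro hcon
        exact hd i m (Finset.mem_range.mp hi) (by omega) hcon.symm
      exact (mul_eq_zero.mp this).resolve_left hne
    obtain ⟨q', hq'⟩ := (dvd_iff_isRoot.mpr hqroot : (X - C (e m)) ∣ q)
    refine ⟨q', ?_⟩
    rw [hq, hq', Finset.prod_range_succ]
    ring
lemma build (p : Polynomial ℝ) (m : ℕ) (hm : 1 ≤ m) (L : ℝ) (hL : 0 < L)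
    (hdeg : p.natDegree ≤ m) (hcoeff : p.coeff m = L)
    (u v : ℕ → ℝ) (w : ℝ)
    (hwu : ∀ j, j + 1 < m → w ≤ u j)
    (huv : ∀ j, j + 1 < m → u j < v j)
    (hvu : ∀ j, j + 2 < m → v j ≤ u (j+1))
    (hop : ∀ j, j + 1 < m → eval (u j) p * eval (v j) p < 0)
    (hw : 0 < (-1:ℝ)^(m+1) * eval w p) :
    ∃ r : ℕ → ℝ, p = C L * ∏ i ∈ range m, (X - C (r i)) ∧ r 0 < w ∧
      ∀ j, j + 1 < m → u j < r (j+1) ∧ r (j+1) < v j := by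
  obtain ⟨mm, rfl⟩ : ∃ mm, m = mm + 1 := ⟨m - 1, by omega⟩
  clear hm
  have hex : ∀ j : ℕ, ∃ x : ℝ, j + 1 < mm + 1 → (u j < x ∧ x < v j ∧ eval x p = 0) := by
    intro j
    by_cases hj : j + 1 < mm + 1
    · obtain ⟨x, h1, h2, h3⟩ := exists_root_between p (huv j hj) (hop j hj)
      exact ⟨x, fun _ => ⟨h1, h2, h3⟩⟩
    · exact ⟨0, fun h => absurd h hj⟩
  choose e he using hex
  have estep : ∀ i, i + 1 < mm → e i < e (i+1) := by
    intro i hi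
    have h1 := he i (by omega)
    have h2 := he (i+1) (by omega)
    have h3 := hvu i (by omega)
    linarith [h1.2.1, h2.1]
  have emono := chainMono estep
  obtain ⟨q, hq⟩ := peel p mm e
    (fun i j hij hj => ne_of_lt (emono i j hij hj))
    (fun i hi => (he i (by omega)).2.2)
  have pne : p ≠ 0 := by
    intro h
    rw [h] at hcoeff
    simp at hcoeff
    linarith
  have ndp : p.natDegree = mm + 1 :=
    le_antisymm hdeg (le_natDegree_of_ne_zero (by rw [hcoeff]; exact ne_of_gt hL))
  have prodne : (∏ i ∈ range mm, (X - C (e i))) ≠ 0 := (factMonic mm e).ne_zero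
  have qne : q ≠ 0 := by
    intro h
    rw [h, mul_zero] at hq
    exact pne hq
  have ndq : q.natDegree = 1 := by
    have := natDegree_mul prodne qne
    rw [← hq, ndp, factProdNatDegree] at this
    omega
  have hq1 : q.coeff 1 = L := by
    have h := coeff_mul_degree_add_degree (∏ i ∈ range mm, (X - C (e i))) q
    rw [factProdNatDegree, ndq, (factMonic mm e).leadingCoeff, one_mul, ← hq] at h
    rw [hcoeff] at h
    rw [Polynomial.leadingCoeff, ndq] at h
    exact h.symm
  have qform := Polynomial.eq_X_add_C_of_natDegree_le_one (by omega : q.natDegree ≤ 1)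
  set ρ : ℝ := -(q.coeff 0) / L with hρ
  have hqρ : q = C L * (X - C ρ) := by
    rw [qform, hq1]
    have hc : L * ρ = -(q.coeff 0) := by
      rw [hρ]
      field_simp
      try ring
    rw [mul_sub, ← C_mul, hc, map_neg, sub_neg_eq_add]
  set r : ℕ → ℝ := fun i => if i = 0 then ρ else e (i - 1) with hr
  have hr0 : r 0 = ρ := rfl
  have hrs : ∀ i, r (i+1) = e i := fun i => by simp [hr]
  have hfac : p = C L * ∏ i ∈ range (mm+1), (X - C (r i)) := by
    rw [Finset.prod_range_succ']
    have : (∏ i ∈ range mm, (X - C (r (i+1)))) = ∏ i ∈ range mm, (X - C (e i)) :=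
      Finset.prod_congr rfl (fun i _ => by rw [hrs])
    rw [this, hr0, hq, hqρ]
    ring
  refine ⟨r, hfac, ?_, fun j hj => by rw [hrs]; exact ⟨(he j hj).1, (he j hj).2.1⟩⟩
  -- show ρ < w
  have hA : 0 < (-1:ℝ)^mm * ∏ i ∈ range mm, (w - e i) := by
    have := prodSign (le_refl 0 |>.trans (Nat.zero_le mm)) (a := e) (x := w)
      (fun i hi => absurd hi (Nat.not_lt_zero i))
      (fun i _ hi => lt_of_le_of_lt (hwu i (by omega)) (he i (by omega)).1)
    simpa using this
  have hev : eval w p = L * ((∏ i ∈ range mm, (w - e i)) * (w - ρ)) := by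
    rw [hfac, evalFact, Finset.prod_range_succ']
    have : (∏ i ∈ range mm, (w - r (i+1))) = ∏ i ∈ range mm, (w - e i) :=
      Finset.prod_congr rfl (fun i _ => by rw [hrs])
    rw [this, hr0]
  have hpow : (-1:ℝ)^(mm+1+1) = (-1:ℝ)^mm := by
    rw [pow_succ, pow_succ]
    ring
  rw [hpow, hev] at hw
  rw [hr0]
  nlinarith [hA, hw, hL, mul_pos hL hA]
def dd (n : ℕ) : ℕ := n / 2 + 1

def WInv (W : ℕ → Polynomial ℝ) (n : ℕ) : Prop :=
  ∃ (La Lb Lc : ℝ) (a b c : ℕ → ℝ),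
    0 < La ∧ 0 < Lb ∧ 0 < Lc ∧ Lc = 8 * Lb + 32 * La ∧
    W n = C La * ∏ i ∈ range (dd n), (X - C (a i)) ∧
    W (n+1) = C Lb * ∏ i ∈ range (dd (n+1)), (X - C (b i)) ∧
    W (n+2) = C Lc * ∏ i ∈ range (dd (n+2)), (X - C (c i)) ∧
    (∀ j, j < dd (n+1) → c j < b j) ∧
    (∀ j, j < dd n → b j < a j) ∧
    (∀ j, j < dd n → a j < c (j+1)) ∧
    (∀ j, j < dd n → a j < 0) ∧ (∀ j, j < dd (n+1) → b j < 0) ∧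
    (∀ j, j < dd (n+2) → c j < 0)

lemma final {p : Polynomial ℝ} {L : ℝ} (hL : 0 < L) {m : ℕ} {r : ℕ → ℝ}
    (hfac : p = C L * ∏ i ∈ range m, (X - C (r i)))
    (hmono : ∀ i j, i < j → j < m → r i < r j) (hneg : ∀ i, i < m → r i < 0) :
    p.roots.card = m ∧ p.roots.toFinset.card = m ∧ ∀ t ∈ p.roots, t < 0 := by
  have hprodne : (∏ i ∈ range m, (X - C (r i))) ≠ 0 := (factMonic m r).ne_zero
  have hroots : p.roots = (range m).val.map r := by
    rw [hfac, Polynomial.roots_C_mul _ (ne_of_gt hL), Polynomial.roots_prod _ _ hprodne]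
    simp [roots_X_sub_C]
  have hinj : ∀ i ∈ range m, ∀ j ∈ range m, r i = r j → i = j := by
    intro i hi j hj hij
    by_contra hne
    rcases Nat.lt_or_ge i j with h | h
    · exact absurd hij (ne_of_lt (hmono i j h (Finset.mem_range.mp hj)))
    · have : j < i := by omega
      exact absurd hij.symm (ne_of_lt (hmono j i this (Finset.mem_range.mp hi)))
  refine ⟨?_, ?_, ?_⟩
  · rw [hroots, Multiset.card_map]
    simp
  · rw [hroots, Multiset.toFinset_map, Finset.val_toFinset]
    rw [Finset.card_image_of_injOn hinj]
    simp
  · intro t ht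
    rw [hroots] at ht
    obtain ⟨i, hi, rfl⟩ := Multiset.mem_map.mp ht
    exact hneg i (by simpa using hi)

lemma base (W : ℕ → Polynomial ℝ)
    (h0 : W 0 = 2 * (1 + X)) (h1 : W 1 = 8 * (5 + 3 * X))
    (h2 : W 2 = 16 * (3 + 45 * X + 16 * X ^ 2)) : WInv W 0 := by
  set s : ℝ := Real.sqrt 1833 with hs
  have hs2 : s ^ 2 = 1833 := Real.sq_sqrt (by norm_num)
  have hs0 : 0 ≤ s := Real.sqrt_nonneg _
  have h42 : 42 < s := by nlinarith
  have h43 : s < 43 := by nlinarith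
  refine ⟨2, 24, 256, (fun _ => -1), (fun _ => -5/3),
    (fun j => if j = 0 then (-45 - s)/32 else (-45 + s)/32),
    by norm_num, by norm_num, by norm_num, by norm_num, ?_, ?_, ?_, ?_, ?_, ?_, ?_, ?_, ?_⟩
  · show W 0 = C 2 * ∏ i ∈ range (dd 0), (X - C (-1))
    have hdd : dd 0 = 1 := rfl
    rw [h0, hdd, Finset.prod_range_one]
    simp only [map_neg, map_one, map_ofNat]
    ring
  · show W 1 = C 24 * ∏ i ∈ range (dd 1), (X - C (-5/3))
    have hdd : dd 1 = 1 := rfl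
    rw [h1, hdd, Finset.prod_range_one]
    have key : (C 24 : Polynomial ℝ) * (X - C (-5/3)) = C 24 * X - C (24 * (-5/3)) := by
      rw [mul_sub, ← C_mul]
    rw [key]
    have : (24:ℝ) * (-5/3) = -40 := by norm_num
    rw [this]
    simp only [map_neg, map_ofNat]
    ring
  · show W 2 = C 256 * ∏ i ∈ range (dd 2), (X - C _)
    have hdd : dd 2 = 2 := rfl
    rw [h2, hdd, Finset.prod_range_succ, Finset.prod_range_one]
    have hc0 : (if (0:ℕ) = 0 then (-45 - s)/32 else (-45 + s)/32) = (-45 - s)/32 := by simp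
    have hc1 : (if (1:ℕ) = 0 then (-45 - s)/32 else (-45 + s)/32) = (-45 + s)/32 := by simp
    rw [hc0, hc1]
    have key : (C 256 : Polynomial ℝ) * ((X - C ((-45 - s)/32)) * (X - C ((-45 + s)/32)))
        = C 256 * X^2 - C (256 * ((-45 - s)/32 + (-45 + s)/32)) * X
          + C (256 * (((-45 - s)/32) * ((-45 + s)/32))) := by
      simp only [C_mul, C_add]
      ring
    have e1 : (256:ℝ) * ((-45 - s)/32 + (-45 + s)/32) = -720 := by ring
    have e2 : (256:ℝ) * (((-45 - s)/32) * ((-45 + s)/32)) = 48 := by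
      have h' : ((-45 - s)/32) * ((-45 + s)/32) = (2025 - s^2)/1024 := by ring
      rw [h', hs2]
      norm_num
    rw [key, e1, e2]
    simp only [map_neg, map_ofNat]
    ring
  · -- c j < b j for j < dd 1 = 1
    intro j hj
    have : j = 0 := by simpa [dd] using hj
    subst this
    norm_num
    nlinarith
  · intro j hj
    norm_num
  · intro j hj
    have : j = 0 := by simpa [dd] using hj
    subst this
    norm_num
    nlinarith
  · intro j hj
    norm_num
  · intro j hj
    norm_num
  · intro j hj
    have hj2 : j < 2 := by simpa [dd] using hj
    interval_cases j
    · norm_num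
      nlinarith
    · norm_num
      nlinarith
lemma signMul {t : ℕ} {L P : ℝ} (hL : 0 < L) (h : 0 < (-1:ℝ)^t * P) :
    0 < (-1:ℝ)^t * (L * P) := by nlinarith

lemma stepA (W : ℕ → Polynomial ℝ) (k : ℕ)
    (hrecA : W (2*k+3) = 20 * W (2*k+2) + 8*(3 - 8*X) * W (2*k+1) - 384 * X * W (2*k))
    (hI : WInv W (2*k)) : WInv W (2*k+1) := by
  obtain ⟨La, Lb, Lc, a, b, c, hLa, hLb, hLc, hrel, hWa, hWb, hWc, hcb, hba, hac,
    haneg, hbneg, hcneg⟩ := hI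
  have d0 : dd (2*k) = k+1 := by unfold dd; omega
  have d1 : dd (2*k+1) = k+1 := by unfold dd; omega
  have d2 : dd (2*k+2) = k+2 := by unfold dd; omega
  rw [d0] at hWa hba hac haneg
  rw [show dd (2*k+0+1) = k+1 from by unfold dd; omega] at hWb hcb hbneg
  rw [show dd (2*k+0+2) = k+2 from by unfold dd; omega] at hWc hcneg
  -- monotonicity
  have cstep : ∀ i, i + 1 < k+2 → c i < c (i+1) := fun i hi =>
    lt_trans (lt_trans (hcb i (by omega)) (hba i (by omega))) (hac i (by omega))
  have cmonoS := chainMono cstep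
  have cmono : ∀ i j, i ≤ j → j < k+2 → c i ≤ c j := by
    intro i j hij hj
    rcases Nat.lt_or_ge i j with h | h
    · exact le_of_lt (cmonoS i j h hj)
    · have : i = j := by omega
      rw [this]
  have bstep : ∀ i, i + 1 < k+1 → b i < b (i+1) := fun i hi =>
    lt_trans (lt_trans (hba i (by omega)) (hac i (by omega))) (hcb (i+1) (by omega))
  have bmonoS := chainMono bstep
  have bmono : ∀ i j, i ≤ j → j < k+1 → b i ≤ b j := by
    intro i j hij hj
    rcases Nat.lt_or_ge i j with h | h
    · exact le_of_lt (bmonoS i j h hj)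
    · have : i = j := by omega
      rw [this]
  -- C-form of recurrence
  have hre' : W (2*k+3) = C 20 * W (2*k+2) + C 24 * W (2*k+1)
      - C 64 * (X * W (2*k+1)) - C 384 * (X * W (2*k)) := by
    rw [hrecA]
    simp only [map_ofNat]
    ring
  -- degrees
  have ndWc : (W (2*k+2)).natDegree = k+2 := by
    rw [hWc]; exact factNatDegree (ne_of_gt hLc) _ _
  have ndWb : (W (2*k+1)).natDegree = k+1 := by
    rw [hWb]; exact factNatDegree (ne_of_gt hLb) _ _
  have ndWa : (W (2*k)).natDegree = k+1 := by
    rw [hWa]; exact factNatDegree (ne_of_gt hLa) _ _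
  have hdeg : (W (2*k+3)).natDegree ≤ k+2 := by
    rw [hre']
    refine le_trans (natDegree_sub_le _ _) ?_
    rw [max_le_iff]
    constructor
    · refine le_trans (natDegree_sub_le _ _) ?_
      rw [max_le_iff]
      constructor
      · refine le_trans (natDegree_add_le _ _) ?_
        rw [max_le_iff]
        constructor
        · exact le_trans (natDegree_C_mul_le _ _) (by omega)
        · exact le_trans (natDegree_C_mul_le _ _) (by omega)
      · refine le_trans (natDegree_C_mul_le _ _) ?_
        refine le_trans natDegree_mul_le ?_
        rw [natDegree_X, ndWb]
        omega
    · refine le_trans (natDegree_C_mul_le _ _) ?_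
      refine le_trans natDegree_mul_le ?_
      rw [natDegree_X, ndWa]
      omega
  set L' : ℝ := 8*Lc + 32*Lb with hL'def
  have hL' : 0 < L' := by rw [hL'def]; linarith
  have hcoeff : (W (2*k+3)).coeff (k+2) = L' := by
    rw [hre']
    rw [coeff_sub, coeff_sub, coeff_add, coeff_C_mul, coeff_C_mul, coeff_C_mul, coeff_C_mul]
    have e1 : (W (2*k+2)).coeff (k+2) = Lc := by
      rw [hWc]; exact factCoeffTop (ne_of_gt hLc) _ _
    have e2 : (W (2*k+1)).coeff (k+2) = 0 := by
      rw [hWb]; exact factCoeffAbove _ _ (by omega) _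
    have e3 : (X * W (2*k+1)).coeff (k+2) = Lb := by
      rw [show k+2 = (k+1)+1 from by omega, coeff_X_mul, hWb]
      exact factCoeffTop (ne_of_gt hLb) _ _
    have e4 : (X * W (2*k)).coeff (k+2) = La := by
      rw [show k+2 = (k+1)+1 from by omega, coeff_X_mul, hWa]
      exact factCoeffTop (ne_of_gt hLa) _ _
    rw [e1, e2, e3, e4, hL'def]
    rw [hrel]
    ring
  have hev : ∀ x : ℝ, eval x (W (2*k+3)) = 20 * eval x (W (2*k+2))
      + 24 * eval x (W (2*k+1)) - 64*(x * eval x (W (2*k+1)))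
      - 384*(x * eval x (W (2*k))) := by
    intro x
    rw [hre']
    simp
  -- sign facts
  have S1 : ∀ j, j < k+2 → 0 < (-1:ℝ)^(k+1-j) * eval (c j) (W (2*k+3)) := by
    intro j hj
    have hcj0 : eval (c j) (W (2*k+2)) = 0 := by
      rw [hWc]; exact evalRootFact _ _ _ hj _
    have hEb : 0 < (-1:ℝ)^(k+1-j) * eval (c j) (W (2*k+1)) := by
      rw [hWb, evalFact]
      apply signMul hLb
      apply prodSign (show j ≤ k+1 by omega)
      · intro i hi
        exact lt_of_lt_of_le (lt_trans (hba i (by omega)) (hac i (by omega)))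
          (cmono (i+1) j (by omega) hj)
      · intro i hji hi
        exact lt_of_le_of_lt (cmono j i hji (by omega)) (hcb i hi)
    have hEa : 0 < (-1:ℝ)^(k+1-j) * eval (c j) (W (2*k)) := by
      rw [hWa, evalFact]
      apply signMul hLa
      apply prodSign (show j ≤ k+1 by omega)
      · intro i hi
        exact lt_of_lt_of_le (hac i (by omega)) (cmono (i+1) j (by omega) hj)
      · intro i hji hi
        exact lt_of_le_of_lt (cmono j i hji (by omega))
          (lt_trans (hcb i (by omega)) (hba i hi))
    have hcjneg : c j < 0 := hcneg j hj
    have heq : eval (c j) (W (2*k+3)) = (24 - 64 * c j) * eval (c j) (W (2*k+1))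
        + (-384 * c j) * eval (c j) (W (2*k)) := by
      rw [hev (c j), hcj0]
      ring
    rw [heq]
    exact signComb (by linarith) (by linarith) hEb hEa
  have S2 : ∀ j, j < k+1 → 0 < (-1:ℝ)^(k+1-j) * eval (b j) (W (2*k+3)) := by
    intro j hj
    have hbj0 : eval (b j) (W (2*k+1)) = 0 := by
      rw [hWb]; exact evalRootFact _ _ _ hj _
    have hEc : 0 < (-1:ℝ)^(k+1-j) * eval (b j) (W (2*k+2)) := by
      rw [hWc, evalFact]
      apply signMul hLc
      rw [show k+1-j = (k+2)-(j+1) from by omega]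
      apply prodSign (show j+1 ≤ k+2 by omega)
      · intro i hi
        exact lt_of_le_of_lt (cmono i j (by omega) (by omega)) (hcb j hj)
      · intro i hji hi
        exact lt_of_lt_of_le (lt_trans (hba j hj) (hac j hj))
          (cmono (j+1) i hji hi)
    have hEa : 0 < (-1:ℝ)^(k+1-j) * eval (b j) (W (2*k)) := by
      rw [hWa, evalFact]
      apply signMul hLa
      apply prodSign (show j ≤ k+1 by omega)
      · intro i hi
        exact lt_of_lt_of_le (hac i (by omega))
          (le_of_lt (lt_of_le_of_lt (cmono (i+1) j (by omega) (by omega)) (hcb j hj)))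
      · intro i hji hi
        exact lt_of_le_of_lt (bmono j i hji hi) (hba i hi)
    have hbjneg : b j < 0 := hbneg j hj
    have heq : eval (b j) (W (2*k+3)) = 20 * eval (b j) (W (2*k+2))
        + (-384 * b j) * eval (b j) (W (2*k)) := by
      rw [hev (b j), hbj0]
      ring
    rw [heq]
    exact signComb (by norm_num) (by linarith) hEc hEa
  -- build
  obtain ⟨r, hrfac, hr0, hrloc⟩ := build (W (2*k+3)) (k+2) (by omega) L' hL' hdeg hcoeff
    b (fun j => c (j+1)) (c 0)
    (fun j hj => le_of_lt (lt_of_le_of_lt (cmono 0 j (by omega) (by omega)) (hcb j (by omega))))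
    (fun j hj => lt_trans (hba j (by omega)) (hac j (by omega)))
    (fun j hj => le_of_lt (hcb (j+1) (by omega)))
    (by
      intro j hj
      have h1 := S2 j (by omega)
      have h2 := S1 (j+1) (by omega)
      rw [show k+1-j = (k-j)+1 from by omega] at h1
      rw [show k+1-(j+1) = k-j from by omega] at h2
      exact opp h1 h2)
    (by
      have h := S1 0 (by omega)
      rw [show k+1-0 = k+1 from by omega] at h
      rw [show (-1:ℝ)^(k+2+1) = (-1:ℝ)^(k+1) from by rw [pow_succ, pow_succ]; ring]
      exact h)
  -- assemble
  refine ⟨Lb, Lc, L', b, c, r, hLb, hLc, hL', hL'def, ?_, ?_, ?_, ?_, ?_, ?_, ?_, ?_, ?_⟩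
  · rw [show dd (2*k+1) = k+1 from by unfold dd; omega]
    exact hWb
  · rw [show dd (2*k+1+1) = k+2 from by unfold dd; omega,
      show 2*k+1+1 = 2*k+2 from by omega]
    exact hWc
  · rw [show dd (2*k+1+2) = k+2 from by unfold dd; omega,
      show 2*k+1+2 = 2*k+3 from by omega]
    exact hrfac
  · -- r j < c j for j < dd (2*k+1+1) = k+2
    rw [show dd (2*k+1+1) = k+2 from by unfold dd; omega]
    intro j hj
    match j with
    | 0 => exact hr0
    | (j'+1) => exact (hrloc j' (by omega)).2
  · rw [show dd (2*k+1) = k+1 from by unfold dd; omega]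
    exact hcb
  · rw [show dd (2*k+1) = k+1 from by unfold dd; omega]
    intro j hj
    exact (hrloc j (by omega)).1
  · rw [show dd (2*k+1) = k+1 from by unfold dd; omega]
    exact hbneg
  · rw [show dd (2*k+1+1) = k+2 from by unfold dd; omega]
    exact hcneg
  · rw [show dd (2*k+1+2) = k+2 from by unfold dd; omega]
    intro j hj
    match j with
    | 0 => exact lt_trans hr0 (hcneg 0 (by omega))
    | (j'+1) =>
      rcases Nat.lt_or_ge (j'+1) (k+2) with h | h
      · exact lt_trans ((hrloc j' (by omega)).2) (hcneg (j'+1) h)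
      · omega
lemma stepB (W : ℕ → Polynomial ℝ) (k : ℕ)
    (hrecB : W (2*k+4) = 20 * X * W (2*k+3) + 8*(3 - 8*X) * W (2*k+2) - 384 * X^2 * W (2*k+1))
    (hI : WInv W (2*k+1)) : WInv W (2*k+2) := by
  obtain ⟨La, Lb, Lc, a, b, c, hLa, hLb, hLc, hrel, hWa, hWb, hWc, hcb, hba, hac,
    haneg, hbneg, hcneg⟩ := hI
  rw [show dd (2*k+1) = k+1 from by unfold dd; omega] at hWa hba hac haneg
  rw [show dd (2*k+1+1) = k+2 from by unfold dd; omega] at hWb hcb hbneg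
  rw [show dd (2*k+1+2) = k+2 from by unfold dd; omega] at hWc hcneg
  rw [show 2*k+1+1 = 2*k+2 from by omega] at hWb
  rw [show 2*k+1+2 = 2*k+3 from by omega] at hWc
  -- monotonicity
  have cstep : ∀ i, i + 1 < k+2 → c i < c (i+1) := fun i hi =>
    lt_trans (lt_trans (hcb i (by omega)) (hba i (by omega))) (hac i (by omega))
  have cmonoS := chainMono cstep
  have cmono : ∀ i j, i ≤ j → j < k+2 → c i ≤ c j := by
    intro i j hij hj
    rcases Nat.lt_or_ge i j with h | h
    · exact le_of_lt (cmonoS i j h hj)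
    · have : i = j := by omega
      rw [this]
  have bstep : ∀ i, i + 1 < k+2 → b i < b (i+1) := fun i hi =>
    lt_trans (lt_trans (hba i (by omega)) (hac i (by omega))) (hcb (i+1) (by omega))
  have bmonoS := chainMono bstep
  have bmono : ∀ i j, i ≤ j → j < k+2 → b i ≤ b j := by
    intro i j hij hj
    rcases Nat.lt_or_ge i j with h | h
    · exact le_of_lt (bmonoS i j h hj)
    · have : i = j := by omega
      rw [this]
  -- C-form
  have hre' : W (2*k+4) = C 20 * (X * W (2*k+3)) + C 24 * W (2*k+2)
      - C 64 * (X * W (2*k+2)) - C 384 * (X^2 * W (2*k+1)) := by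
    rw [hrecB]
    simp only [map_ofNat]
    ring
  have ndWc : (W (2*k+3)).natDegree = k+2 := by
    rw [hWc]; exact factNatDegree (ne_of_gt hLc) _ _
  have ndWb : (W (2*k+2)).natDegree = k+2 := by
    rw [hWb]; exact factNatDegree (ne_of_gt hLb) _ _
  have ndWa : (W (2*k+1)).natDegree = k+1 := by
    rw [hWa]; exact factNatDegree (ne_of_gt hLa) _ _
  have hdeg : (W (2*k+4)).natDegree ≤ k+3 := by
    rw [hre']
    refine le_trans (natDegree_sub_le _ _) ?_
    rw [max_le_iff]
    constructor
    · refine le_trans (natDegree_sub_le _ _) ?_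
      rw [max_le_iff]
      constructor
      · refine le_trans (natDegree_add_le _ _) ?_
        rw [max_le_iff]
        constructor
        · refine le_trans (natDegree_C_mul_le _ _) ?_
          refine le_trans natDegree_mul_le ?_
          rw [natDegree_X, ndWc]
          omega
        · exact le_trans (natDegree_C_mul_le _ _) (by omega)
      · refine le_trans (natDegree_C_mul_le _ _) ?_
        refine le_trans natDegree_mul_le ?_
        rw [natDegree_X, ndWb]
        omega
    · refine le_trans (natDegree_C_mul_le _ _) ?_
      refine le_trans natDegree_mul_le ?_
      rw [natDegree_X_pow, ndWa]
      omega
  set L' : ℝ := 8*Lc + 32*Lb with hL'def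
  have hL' : 0 < L' := by rw [hL'def]; linarith
  have hcoeff : (W (2*k+4)).coeff (k+3) = L' := by
    rw [hre']
    rw [coeff_sub, coeff_sub, coeff_add, coeff_C_mul, coeff_C_mul, coeff_C_mul, coeff_C_mul]
    have e1 : (X * W (2*k+3)).coeff (k+3) = Lc := by
      rw [show k+3 = (k+2)+1 from by omega, coeff_X_mul, hWc]
      exact factCoeffTop (ne_of_gt hLc) _ _
    have e2 : (W (2*k+2)).coeff (k+3) = 0 := by
      rw [hWb]; exact factCoeffAbove _ _ (by omega) _
    have e3 : (X * W (2*k+2)).coeff (k+3) = Lb := by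
      rw [show k+3 = (k+2)+1 from by omega, coeff_X_mul, hWb]
      exact factCoeffTop (ne_of_gt hLb) _ _
    have e4 : (X^2 * W (2*k+1)).coeff (k+3) = La := by
      rw [show k+3 = (k+1)+2 from by omega, coeff_X_pow_mul, hWa]
      exact factCoeffTop (ne_of_gt hLa) _ _
    rw [e1, e2, e3, e4, hL'def, hrel]
    ring
  have hev : ∀ x : ℝ, eval x (W (2*k+4)) = 20 * (x * eval x (W (2*k+3)))
      + 24 * eval x (W (2*k+2)) - 64*(x * eval x (W (2*k+2)))
      - 384*(x^2 * eval x (W (2*k+1))) := by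
    intro x
    rw [hre']
    simp
  -- sign facts
  have S1 : ∀ j, j < k+2 → 0 < (-1:ℝ)^(k+2-j) * eval (c j) (W (2*k+4)) := by
    intro j hj
    have hcj0 : eval (c j) (W (2*k+3)) = 0 := by
      rw [hWc]; exact evalRootFact _ _ _ hj _
    have hEb : 0 < (-1:ℝ)^(k+2-j) * eval (c j) (W (2*k+2)) := by
      rw [hWb, evalFact]
      apply signMul hLb
      apply prodSign (show j ≤ k+2 by omega)
      · intro i hi
        exact lt_of_lt_of_le (lt_trans (hba i (by omega)) (hac i (by omega)))
          (cmono (i+1) j (by omega) hj)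
      · intro i hji hi
        exact lt_of_le_of_lt (cmono j i hji (by omega)) (hcb i hi)
    have hEa : 0 < (-1:ℝ)^(k+1-j) * eval (c j) (W (2*k+1)) := by
      rw [hWa, evalFact]
      apply signMul hLa
      apply prodSign (show j ≤ k+1 by omega)
      · intro i hi
        exact lt_of_lt_of_le (hac i (by omega)) (cmono (i+1) j (by omega) hj)
      · intro i hji hi
        exact lt_of_le_of_lt (cmono j i hji (by omega))
          (lt_trans (hcb i (by omega)) (hba i hi))
    have hcjneg : c j < 0 := hcneg j hj
    have heq : eval (c j) (W (2*k+4)) = (24 - 64 * c j) * eval (c j) (W (2*k+2))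
        + (-384 * (c j * c j)) * eval (c j) (W (2*k+1)) := by
      rw [hev (c j), hcj0]
      ring
    rw [heq, show k+2-j = (k+1-j)+1 from by omega]
    have hsq : -384 * (c j * c j) < 0 := by nlinarith
    rw [show k+2-j = (k+1-j)+1 from by omega] at hEb
    exact signComb' (by linarith) hsq hEb hEa
  have S2 : ∀ j, j < k+2 → 0 < (-1:ℝ)^(k+2-j) * eval (b j) (W (2*k+4)) := by
    intro j hj
    have hbj0 : eval (b j) (W (2*k+2)) = 0 := by
      rw [hWb]; exact evalRootFact _ _ _ hj _
    have hEc : 0 < (-1:ℝ)^(k+1-j) * eval (b j) (W (2*k+3)) := by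
      rw [hWc, evalFact]
      apply signMul hLc
      rw [show k+1-j = (k+2)-(j+1) from by omega]
      apply prodSign (show j+1 ≤ k+2 by omega)
      · intro i hi
        exact lt_of_le_of_lt (cmono i j (by omega) (by omega)) (hcb j hj)
      · intro i hji hi
        have hjk : j < k+1 := by omega
        exact lt_of_lt_of_le (lt_trans (hba j hjk) (hac j hjk))
          (cmono (j+1) i hji hi)
    have hEa : 0 < (-1:ℝ)^(k+1-j) * eval (b j) (W (2*k+1)) := by
      rw [hWa, evalFact]
      apply signMul hLa
      apply prodSign (show j ≤ k+1 by omega)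
      · intro i hi
        refine lt_of_lt_of_le (hac i (by omega)) ?_
        exact le_of_lt (lt_of_le_of_lt (cmono (i+1) j (by omega) (by omega)) (hcb j hj))
      · intro i hji hi
        exact lt_of_le_of_lt (bmono j i hji (by omega)) (hba i hi)
    have hbjneg : b j < 0 := hbneg j hj
    have heq : eval (b j) (W (2*k+4)) = (20 * b j) * eval (b j) (W (2*k+3))
        + (-384 * (b j * b j)) * eval (b j) (W (2*k+1)) := by
      rw [hev (b j), hbj0]
      ring
    rw [heq, show k+2-j = (k+1-j)+1 from by omega]
    have hsq : -384 * (b j * b j) < 0 := by nlinarith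
    exact signComb2 (by linarith) hsq hEc hEa
  have e0 : 0 < eval 0 (W (2*k+4)) := by
    have hEb : 0 < eval 0 (W (2*k+2)) := by
      rw [hWb, evalFact]
      have h := prodSign (le_refl (k+2)) (x := (0:ℝ)) (a := b)
        (fun i hi => hbneg i hi) (fun i h1 h2 => absurd h1 (by omega))
      simp only [Nat.sub_self, pow_zero, one_mul] at h
      exact mul_pos hLb h
    rw [hev 0]
    simp only [zero_mul, mul_zero]
    norm_num
    nlinarith
  -- build
  obtain ⟨r, hrfac, hr0, hrloc⟩ := build (W (2*k+4)) (k+3) (by omega) L' hL' hdeg hcoeff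
    b (fun j => if j = k+1 then 0 else c (j+1)) (c 0)
    (fun j hj => le_of_lt (lt_of_le_of_lt (cmono 0 j (by omega) (by omega)) (hcb j (by omega))))
    (by
      intro j hj
      by_cases h : j = k+1
      · rw [if_pos h, h]
        exact hbneg (k+1) (by omega)
      · rw [if_neg h]
        exact lt_trans (hba j (by omega)) (hac j (by omega)))
    (by
      intro j hj
      rw [if_neg (by omega : ¬ j = k+1)]
      exact le_of_lt (hcb (j+1) (by omega)))
    (by
      intro j hj
      by_cases h : j = k+1
      · rw [if_pos h, h]
        have h1 := S2 (k+1) (by omega)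
        rw [show k+2-(k+1) = 1 from by omega] at h1
        have hneg' : eval (b (k+1)) (W (2*k+4)) < 0 := by
          nlinarith [h1]
        exact mul_neg_of_neg_of_pos hneg' e0
      · rw [if_neg h]
        have h1 := S2 j (by omega)
        have h2 := S1 (j+1) (by omega)
        rw [show k+2-j = (k+1-j)+1 from by omega] at h1
        rw [show k+2-(j+1) = k+1-j from by omega] at h2
        exact opp h1 h2)
    (by
      have h := S1 0 (by omega)
      rw [show k+2-0 = k+2 from by omega] at h
      rw [show (-1:ℝ)^(k+3+1) = (-1:ℝ)^(k+2) from by rw [pow_succ, pow_succ]; ring]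
      exact h)
  -- assemble
  refine ⟨Lb, Lc, L', b, c, r, hLb, hLc, hL', hL'def, ?_, ?_, ?_, ?_, ?_, ?_, ?_, ?_, ?_⟩
  · rw [show dd (2*k+2) = k+2 from by unfold dd; omega]
    exact hWb
  · rw [show dd (2*k+2+1) = k+2 from by unfold dd; omega,
      show 2*k+2+1 = 2*k+3 from by omega]
    exact hWc
  · rw [show dd (2*k+2+2) = k+3 from by unfold dd; omega,
      show 2*k+2+2 = 2*k+4 from by omega]
    exact hrfac
  · rw [show dd (2*k+2+1) = k+2 from by unfold dd; omega]
    intro j hj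
    match j with
    | 0 => exact hr0
    | (j'+1) =>
      have h := (hrloc j' (by omega)).2
      rw [if_neg (by omega : ¬ j' = k+1)] at h
      exact h
  · rw [show dd (2*k+2) = k+2 from by unfold dd; omega]
    exact hcb
  · rw [show dd (2*k+2) = k+2 from by unfold dd; omega]
    intro j hj
    exact (hrloc j (by omega)).1
  · rw [show dd (2*k+2) = k+2 from by unfold dd; omega]
    exact hbneg
  · rw [show dd (2*k+2+1) = k+2 from by unfold dd; omega]
    exact hcneg
  · rw [show dd (2*k+2+2) = k+3 from by unfold dd; omega]
    intro j hj
    match j with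
    | 0 => exact lt_trans hr0 (hcneg 0 (by omega))
    | (j'+1) =>
      have h := (hrloc j' (by omega)).2
      by_cases hc : j' = k+1
      · rw [if_pos hc] at h
        exact h
      · rw [if_neg hc] at h
        exact lt_trans h (hcneg (j'+1) (by omega))
theorem stmt11 (W : ℕ → Polynomial ℝ)
    (h0 : W 0 = 2 * (1 + X)) (h1 : W 1 = 8 * (5 + 3 * X))
    (h2 : W 2 = 16 * (3 + 45 * X + 16 * X ^ 2))
    (hrec : ∀ n, (Even (n + 3) → W (n + 3) =
        20 * X * W (n + 2) + 8 * (3 - 8 * X) * W (n + 1) - 384 * X ^ 2 * W n) ∧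
      (Odd (n + 3) → W (n + 3) =
        20 * W (n + 2) + 8 * (3 - 8 * X) * W (n + 1) - 384 * X * W n)) :
    ∀ n, (W n).roots.card = (n + 2) / 2 ∧
      (W n).roots.toFinset.card = (n + 2) / 2 ∧
      ∀ t ∈ (W n).roots, t < 0 := by
  have hInv : ∀ n, WInv W n := by
    intro n
    induction n with
    | zero => exact base W h0 h1 h2
    | succ n ih =>
      rcases Nat.even_or_odd n with ⟨k, hk⟩ | ⟨k, hk⟩
      · have h2k : n = 2*k := by omega
        subst h2k
        exact stepA W k ((hrec (2*k)).2 ⟨k+1, by ring⟩) ih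
      · have h2k : n = 2*k+1 := by omega
        subst h2k
        have hr := (hrec (2*k+1)).1 ⟨k+2, by ring⟩
        rw [show 2*k+1+3 = 2*k+4 from by omega, show 2*k+1+2 = 2*k+3 from by omega,
          show 2*k+1+1 = 2*k+2 from by omega] at hr
        exact stepB W k hr ih
  intro n
  obtain ⟨La, Lb, Lc, a, b, c, hLa, hLb, hLc, hrel, hWa, hWb, hWc, hcb, hba, hac,
    haneg, hbneg, hcneg⟩ := hInv n
  have hddm : dd n ≤ dd (n+1) := by unfold dd; omega
  have astep : ∀ j, j + 1 < dd n → a j < a (j+1) := fun j hj =>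
    lt_trans (lt_trans (hac j (by omega)) (hcb (j+1) (by omega))) (hba (j+1) (by omega))
  have amono := chainMono astep
  obtain ⟨hc1, hc2, hc3⟩ := final hLa hWa amono haneg
  refine ⟨?_, ?_, hc3⟩
  · rw [hc1]; unfold dd; omega
  · rw [hc2]; unfold dd; omega
end

section
/- With W_n(z) defined by W_0(z)=2(1+z), W_1(z)=8(5+3z), W_2(z)=16(3+45z+16z^2), and the recurrence W_n = 20z·W_{n-1} + 8(3-8z)·W_{n-2} - 384z^2·W_{n-3} (n even), W_n = 20·W_{n-1} + 8(3-8z)·W_{n-2} - 384z·W_{n-3} (n odd): for every n ≥ 2, the roots of W_n and W_{n-2} strictly interlace; that is, if x_{n,1} < ⋯ < x_{n,d_n} are the roots of W_n and x_{n-2,1} < ⋯ < x_{n-2,d_n - 1} those of W_{n-2} (where d_n = ⌈(n+1)/2⌉), then x_{n,1} < x_{n-2,1} < x_{n,2} < x_{n-2,2} < ⋯ < x_{n-2,d_n−1} < x_{n,d_n}. -/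
/-!
Let `p, q, r, s` be four consecutive `W`'s, so that
`s = X ^ e * (20 * r - 384 * X * p) + 8 * (3 - 8 * X) * q` with `e ∈ {0, 1}`. Inductively, the
roots of `p, q, r` are simple and negative, the roots `bᵢ` of `q` interlace those of `p`, and the
roots `cᵢ` of `r` interlace those of both `q` and `p` (the last is the claim). At a root of `q`
only `r` and `p` contribute to `s`, at a root of `r` only `q` and `p` do, and in both cases the two
contributions have the same sign, dictated by the interlacing. Hence `s` changes sign on each of
`(β, c₁), (b₁, c₂), (b₂, c₃), …` (closed off by `(b_last, 0)` when `e = 1`, and with `β ≪ 0`),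
which gives all `deg s` roots of `s`, and they interlace those of `q` and `r`.

The leading coefficients `ℓₙ` of the `W`'s satisfy `ℓₙ₊₃ = 20 ℓₙ₊₂ - 64 ℓₙ₊₁ - 384 ℓₙ`; as
`x³ - 20 x² + 64 x + 384 = (x - 12) (x² - 8 x - 32)` and the initial values already satisfy
`ℓ₂ = 8 ℓ₁ + 32 ℓ₀`, in fact `ℓₙ₊₂ = 8 ℓₙ₊₁ + 32 ℓₙ`, so they stay positive.
-/

open Polynomial

def SortedRoots (p : ℝ[X]) (d : ℕ) (r : ℕ → ℝ) : Prop :=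
  p.roots.card = d ∧ p.roots.toFinset = (Finset.Icc 1 d).image r ∧
    StrictMonoOn r (Set.Icc 1 d)

theorem StrictMonoOn.eqOn_of_image_eq {α β : Type*} [LinearOrder α] [WellFoundedLT α]
    [Preorder β] {s : Set α} {u v : α → β} (hu : StrictMonoOn u s) (hv : StrictMonoOn v s)
    (h : u '' s = v '' s) : Set.EqOn u v s := by
  have hu' : StrictMono (s.domRestrict u) := fun a b hab => hu a.2 b.2 hab
  have hv' : StrictMono (s.domRestrict v) := fun a b hab => hv a.2 b.2 hab
  have := (hu'.range_inj hv').mp (by rwa [Set.range_domRestrict, Set.range_domRestrict])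
  exact fun x hx => congrFun this ⟨x, hx⟩

namespace SortedRoots

variable {p : ℝ[X]} {d : ℕ} {r : ℕ → ℝ}

theorem eqOn {r' : ℕ → ℝ} (hr : SortedRoots p d r) (hr' : SortedRoots p d r') :
    Set.EqOn r r' (Set.Icc 1 d) := by
  refine hr.2.2.eqOn_of_image_eq hr'.2.2 ?_
  simpa [Finset.coe_image] using congrArg (↑· : Finset ℝ → Set ℝ) (hr.2.1.symm.trans hr'.2.1)

theorem isRoot (hr : SortedRoots p d r) {i : ℕ} (hi1 : 1 ≤ i) (hid : i ≤ d) : p.IsRoot (r i) := by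
  have : r i ∈ p.roots.toFinset :=
    hr.2.1 ▸ Finset.mem_image_of_mem r (Finset.mem_Icc.mpr ⟨hi1, hid⟩)
  exact isRoot_of_mem_roots (Multiset.mem_toFinset.mp this)

theorem eval_eq_prod (hr : SortedRoots p d r) (hp : p.natDegree = d) (t : ℝ) :
    p.eval t = p.leadingCoeff * ∏ j ∈ Finset.Icc 1 d, (t - r j) := by
  obtain ⟨hcard, himage, hmono⟩ := hr
  have hinj : Set.InjOn r (Finset.Icc 1 d) := by simpa using hmono.injOn
  have hnodup : p.roots.Nodup := by
    rw [← Multiset.toFinset_card_eq_card_iff_nodup, himage, hcard,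
      Finset.card_image_of_injOn hinj, Nat.card_Icc, Nat.add_sub_cancel]
  have hroots : p.roots = ((Finset.Icc 1 d).image r).val := by
    rw [← himage, Multiset.toFinset_val, hnodup.dedup]
  rw [(splits_iff_card_roots.mpr (hcard.trans hp.symm)).eval_eq_prod_roots, hroots,
    ← Finset.prod_eq_multiset_prod, Finset.prod_image hinj]

theorem neg_one_pow_mul_eval_pos (hr : SortedRoots p d r) (hp : p.natDegree = d)
    (hlc : 0 < p.leadingCoeff) {k : ℕ} (hk : k ≤ d) {t : ℝ} (hlow : 1 ≤ k → r k < t)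
    (hhigh : k < d → t < r (k + 1)) : 0 < (-1) ^ (d + k) * p.eval t := by
  have hmono := hr.2.2.monotoneOn
  have hsplit : ∏ j ∈ Finset.Icc 1 d, (t - r j) = (-1) ^ (d - k) *
      ((∏ j ∈ Finset.Ioc 0 k, (t - r j)) * ∏ j ∈ Finset.Ioc k d, (r j - t)) := by
    have hIcc : Finset.Icc 1 d = Finset.Ioc 0 d := Finset.Icc_add_one_left_eq_Ioc 0 d
    rw [hIcc, ← Finset.prod_Ioc_consecutive _ (Nat.zero_le k) hk,
      mul_left_comm, ← Nat.card_Ioc k d, ← Finset.prod_neg]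
    simp only [neg_sub]
  have hbelow : 0 < ∏ j ∈ Finset.Ioc 0 k, (t - r j) := by
    refine Finset.prod_pos fun j hj => ?_
    obtain ⟨hj0, hjk⟩ := Finset.mem_Ioc.mp hj
    linarith [(hmono ⟨hj0, by omega⟩ ⟨by omega, hk⟩ hjk).trans_lt (hlow (by omega))]
  have habove : 0 < ∏ j ∈ Finset.Ioc k d, (r j - t) := by
    refine Finset.prod_pos fun j hj => ?_
    obtain ⟨hkj, hjd⟩ := Finset.mem_Ioc.mp hj
    linarith [(hhigh (by omega)).trans_le (hmono ⟨by omega, by omega⟩ ⟨by omega, hjd⟩ hkj)]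
  have hsign : (-1 : ℝ) ^ (d + k) * (-1) ^ (d - k) = 1 := by
    rw [← pow_add, show d + k + (d - k) = 2 * d by omega, pow_mul, neg_one_sq, one_pow]
  rw [hr.eval_eq_prod hp, hsplit, mul_left_comm, ← mul_assoc ((-1 : ℝ) ^ (d + k)), hsign,
    one_mul]
  positivity

theorem eval_pos (hr : SortedRoots p d r) (hp : p.natDegree = d) (hlc : 0 < p.leadingCoeff)
    {t : ℝ} (ht : ∀ i, 1 ≤ i → i ≤ d → r i < t) : 0 < p.eval t := by
  have := hr.neg_one_pow_mul_eval_pos hp hlc le_rfl (ht d · le_rfl) (absurd · (lt_irrefl d))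
  rwa [← two_mul, pow_mul, neg_one_sq, one_pow, one_mul] at this

end SortedRoots

theorem mul_neg_of_neg_one_pow_mul_pos {x y : ℝ} {k : ℕ} (hx : 0 < (-1) ^ (k + 1) * x)
    (hy : 0 < (-1) ^ k * y) : x * y < 0 := by
  rcases neg_one_pow_eq_or ℝ k with h | h <;> simp only [pow_succ, h] at hx hy <;> nlinarith

namespace Polynomial

theorem exists_isRoot_mem_Ioo_of_eval_mul_neg (p : ℝ[X]) {a b : ℝ} (hab : a < b)
    (h : p.eval a * p.eval b < 0) : ∃ x ∈ Set.Ioo a b, p.IsRoot x := by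
  have hcont : ContinuousOn (fun x => p.eval x) (Set.Icc a b) := p.continuous.continuousOn
  rcases mul_neg_iff.mp h with ⟨ha, hb⟩ | ⟨ha, hb⟩
  · exact intermediate_value_Ioo' hab.le hcont ⟨hb, ha⟩
  · exact intermediate_value_Ioo hab.le hcont ⟨ha, hb⟩

theorem exists_sortedRoots_of_eval_mul_neg {p : ℝ[X]} {d : ℕ} (hp : p.natDegree = d)
    {l u : ℕ → ℝ} (hlu : ∀ i < d, l i < u i) (hul : ∀ i, i + 1 < d → u i ≤ l (i + 1))
    (hsign : ∀ i < d, p.eval (l i) * p.eval (u i) < 0) :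
    ∃ r, SortedRoots p d r ∧ ∀ i < d, l i < r (i + 1) ∧ r (i + 1) < u i := by
  have hroot : ∀ i < d, ∃ x ∈ Set.Ioo (l i) (u i), p.IsRoot x := fun i hi =>
    p.exists_isRoot_mem_Ioo_of_eval_mul_neg (hlu i hi) (hsign i hi)
  choose! x hx hxroot using hroot
  set r : ℕ → ℝ := fun i => x (i - 1)
  have hmono : StrictMonoOn r (Set.Icc 1 d) := by
    refine strictMonoOn_of_lt_add_one Set.ordConnected_Icc fun i _ hi hi' => ?_
    obtain ⟨j, rfl⟩ := Nat.exists_eq_add_of_le' hi.1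
    have := hi'.2
    calc x j < u j := (hx j (by omega)).2
      _ ≤ l (j + 1) := hul j (by omega)
      _ < x (j + 1) := (hx (j + 1) (by omega)).1
  have hsub : (Finset.Icc 1 d).image r ⊆ p.roots.toFinset := by
    intro y hy
    obtain ⟨i, hi, rfl⟩ := Finset.mem_image.mp hy
    obtain ⟨hi1, hid⟩ := Finset.mem_Icc.mp hi
    have hp0 : p ≠ 0 := fun h0 => by simpa [h0] using hsign (i - 1) (by omega)
    exact Multiset.mem_toFinset.mpr ((mem_roots hp0).mpr (hxroot (i - 1) (by omega)))
  have hcard : ((Finset.Icc 1 d).image r).card = d := by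
    rw [Finset.card_image_of_injOn (by simpa using hmono.injOn), Nat.card_Icc, Nat.add_sub_cancel]
  have hle : p.roots.card ≤ d := hp ▸ card_roots' p
  have hge : d ≤ p.roots.card := calc
    d = ((Finset.Icc 1 d).image r).card := hcard.symm
    _ ≤ p.roots.toFinset.card := Finset.card_le_card hsub
    _ ≤ p.roots.card := Multiset.toFinset_card_le _
  have himage := Finset.eq_of_subset_of_card_le hsub
    (by rw [hcard]; exact (Multiset.toFinset_card_le _).trans hle)
  exact ⟨r, ⟨le_antisymm hle hge, himage.symm, hmono⟩, fun i hi => hx i hi⟩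

theorem exists_lt_neg_one_pow_mul_eval_pos {p : ℝ[X]} (hp : 0 < p.natDegree)
    (hlc : 0 < p.leadingCoeff) (β : ℝ) : ∃ x < β, 0 < (-1) ^ p.natDegree * p.eval x := by
  set q := C ((-1) ^ p.natDegree) * p.comp (-X)
  have hsq : ((-1 : ℝ) ^ p.natDegree) ^ 2 = 1 := by rw [← pow_mul, mul_comm, pow_mul]; norm_num
  have hqlc : q.leadingCoeff = p.leadingCoeff := by
    simp only [q, leadingCoeff_mul, leadingCoeff_C, comp_neg_X_leadingCoeff_eq, ← mul_assoc,
      ← sq, hsq, one_mul]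
  have hqdeg : 0 < q.degree := by
    rw [degree_C_mul (by simp), degree_comp_neg_X, degree_eq_natDegree (by rintro rfl; simp at hp)]
    exact_mod_cast hp
  obtain ⟨x, hxq, hxβ⟩ := ((q.tendsto_atTop_of_leadingCoeff_nonneg hqdeg (hqlc ▸ hlc.le)
    ).eventually_gt_atTop 0 |>.and (Filter.eventually_gt_atTop (-β))).exists
  exact ⟨-x, by linarith, by simpa [q] using hxq⟩

end Polynomial

def Interlaces (s r : ℕ → ℝ) (ns nr : ℕ) : Prop :=
  (∀ i, 1 ≤ i → i ≤ nr → s i < r i) ∧ (∀ i, 1 ≤ i → i < ns → r i < s (i + 1))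

namespace Interlaces

variable {s r : ℕ → ℝ} {ns nr : ℕ} {p : ℝ[X]}

theorem neg_one_pow_mul_eval_right_pos (h : Interlaces s r ns nr) (hn : nr ≤ ns)
    (hs : SortedRoots p ns s) (hp : p.natDegree = ns) (hlc : 0 < p.leadingCoeff)
    {i : ℕ} (hi1 : 1 ≤ i) (hi : i ≤ nr) : 0 < (-1) ^ (ns + i) * p.eval (r i) :=
  hs.neg_one_pow_mul_eval_pos hp hlc (by omega) (fun _ => h.1 i hi1 hi) (h.2 i hi1)

theorem neg_one_pow_mul_eval_left_pos (h : Interlaces s r ns nr) (hn : ns ≤ nr + 1)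
    (hr : SortedRoots p nr r) (hp : p.natDegree = nr) (hlc : 0 < p.leadingCoeff)
    {j : ℕ} (hj : j < ns) : 0 < (-1) ^ (nr + j) * p.eval (s (j + 1)) :=
  hr.neg_one_pow_mul_eval_pos hp hlc (by omega) (fun h1 => h.2 j h1 (by omega))
    (fun hlt => h.1 (j + 1) (by omega) hlt)

end Interlaces

theorem natDegree_leadingCoeff_of_recurrence {p q r s : ℝ[X]} {k e : ℕ}
    (hs : s = X ^ e * (20 * r - 384 * X * p) + 8 * (3 - 8 * X) * q)
    (hp : p.natDegree = k) (hq : q.natDegree = k + e) (hr : r.natDegree = k + 1)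
    (hlcp : 0 < p.leadingCoeff) (hlcq : 0 < q.leadingCoeff)
    (hlcr : r.leadingCoeff = 8 * q.leadingCoeff + 32 * p.leadingCoeff) :
    s.natDegree = k + e + 1 ∧ s.leadingCoeff = 8 * r.leadingCoeff + 32 * q.leadingCoeff := by
  have hle : s.natDegree ≤ k + e + 1 := by
    rw [hs]
    compute_degree
    rw [hp, hq, hr]
    omega
  have hs' : s = C 20 * r * X ^ e - C 384 * p * X ^ (e + 1) + C 24 * q - C 64 * q * X := by
    rw [hs]; simp only [map_ofNat]; ring
  have hcoeff : s.coeff (k + e + 1) = 8 * r.leadingCoeff + 32 * q.leadingCoeff := by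
    have h20r : (C 20 * r * X ^ e).coeff (k + e + 1) = 20 * r.leadingCoeff := by
      rw [show k + e + 1 = k + 1 + e by ring, coeff_mul_X_pow, coeff_C_mul, leadingCoeff, hr]
    have h384p : (C 384 * p * X ^ (e + 1)).coeff (k + e + 1) = 384 * p.leadingCoeff := by
      rw [show k + e + 1 = k + (e + 1) by ring, coeff_mul_X_pow, coeff_C_mul, leadingCoeff, hp]
    have h24q : (C 24 * q).coeff (k + e + 1) = 0 := by
      rw [coeff_C_mul, coeff_eq_zero_of_natDegree_lt (by omega), mul_zero]
    have h64q : (C 64 * q * X).coeff (k + e + 1) = 64 * q.leadingCoeff := by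
      rw [coeff_mul_X, coeff_C_mul, leadingCoeff, hq]
    rw [hs', coeff_sub, coeff_add, coeff_sub, h20r, h384p, h24q, h64q, hlcr]
    ring
  have hpos : 0 < 8 * r.leadingCoeff + 32 * q.leadingCoeff := by rw [hlcr]; linarith
  have hdeg := le_antisymm hle (le_natDegree_of_ne_zero (hcoeff ▸ hpos.ne'))
  exact ⟨hdeg, by rw [leadingCoeff, hdeg, hcoeff]⟩

structure InterlacedTriple (p q r : ℝ[X]) (k n : ℕ) (a b c : ℕ → ℝ) : Prop where
  natDegree_p : p.natDegree = k
  natDegree_q : q.natDegree = n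
  natDegree_r : r.natDegree = k + 1
  leadingCoeff_p_pos : 0 < p.leadingCoeff
  leadingCoeff_q_pos : 0 < q.leadingCoeff
  leadingCoeff_r : r.leadingCoeff = 8 * q.leadingCoeff + 32 * p.leadingCoeff
  sortedRoots_p : SortedRoots p k a
  sortedRoots_q : SortedRoots q n b
  sortedRoots_r : SortedRoots r (k + 1) c
  roots_q_neg : ∀ i, 1 ≤ i → i ≤ n → b i < 0
  roots_r_neg : ∀ i, 1 ≤ i → i ≤ k + 1 → c i < 0
  interlaces_qp : Interlaces b a n k
  interlaces_rq : Interlaces c b (k + 1) n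
  interlaces_rp : Interlaces c a (k + 1) k

namespace InterlacedTriple

variable {p q r s : ℝ[X]} {k n e : ℕ} {a b c : ℕ → ℝ}

theorem leadingCoeff_r_pos (T : InterlacedTriple p q r k n a b c) : 0 < r.leadingCoeff := by
  rw [T.leadingCoeff_r]; linarith [T.leadingCoeff_p_pos, T.leadingCoeff_q_pos]

theorem neg_one_pow_mul_eval_q_root_pos (T : InterlacedTriple p q r k (k + e) a b c)
    (he : e ≤ 1) (hs : s = X ^ e * (20 * r - 384 * X * p) + 8 * (3 - 8 * X) * q) {j : ℕ}
    (hj : j < k + e) : 0 < (-1) ^ (k + e + j) * s.eval (b (j + 1)) := by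
  have hr := T.interlaces_rq.neg_one_pow_mul_eval_right_pos (by omega) T.sortedRoots_r
    T.natDegree_r T.leadingCoeff_r_pos (i := j + 1) (by omega) (by omega)
  have hp := T.interlaces_qp.neg_one_pow_mul_eval_left_pos (by omega) T.sortedRoots_p
    T.natDegree_p T.leadingCoeff_p_pos hj
  have hb := neg_pos.mpr (T.roots_q_neg (j + 1) (by omega) (by omega))
  have hq : q.eval (b (j + 1)) = 0 := T.sortedRoots_q.isRoot (by omega) (by omega)
  have : (-1) ^ (k + e + j) * s.eval (b (j + 1)) = (-b (j + 1)) ^ e *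
      (20 * ((-1) ^ (k + 1 + (j + 1)) * r.eval (b (j + 1))) +
        384 * (-b (j + 1)) * ((-1) ^ (k + j) * p.eval (b (j + 1)))) := by
    simp only [hs, eval_add, eval_mul, eval_sub, eval_pow, eval_X, eval_ofNat, hq]
    ring
  rw [this]
  positivity

theorem neg_one_pow_mul_eval_r_root_pos (T : InterlacedTriple p q r k (k + e) a b c)
    (hs : s = X ^ e * (20 * r - 384 * X * p) + 8 * (3 - 8 * X) * q) {j : ℕ} (hj : j < k + 1) :
    0 < (-1) ^ (k + e + j) * s.eval (c (j + 1)) := by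
  have hp := T.interlaces_rp.neg_one_pow_mul_eval_left_pos le_rfl T.sortedRoots_p
    T.natDegree_p T.leadingCoeff_p_pos hj
  have hq := T.interlaces_rq.neg_one_pow_mul_eval_left_pos (by omega) T.sortedRoots_q
    T.natDegree_q T.leadingCoeff_q_pos hj
  have hc := neg_pos.mpr (T.roots_r_neg (j + 1) (by omega) (by omega))
  have hr : r.eval (c (j + 1)) = 0 := T.sortedRoots_r.isRoot (by omega) (by omega)
  have : (-1) ^ (k + e + j) * s.eval (c (j + 1)) =
      384 * (-c (j + 1)) ^ (e + 1) * ((-1) ^ (k + j) * p.eval (c (j + 1))) +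
        8 * (3 + 8 * -c (j + 1)) * ((-1) ^ (k + e + j) * q.eval (c (j + 1))) := by
    simp only [hs, eval_add, eval_mul, eval_sub, eval_pow, eval_X, eval_ofNat, hr]
    ring
  rw [this]
  positivity

theorem eval_zero_pos (T : InterlacedTriple p q r k n a b c)
    (hs : s = X ^ e * (20 * r - 384 * X * p) + 8 * (3 - 8 * X) * q) : 0 < s.eval 0 := by
  have hq := T.sortedRoots_q.eval_pos T.natDegree_q T.leadingCoeff_q_pos T.roots_q_neg
  have hr := T.sortedRoots_r.eval_pos T.natDegree_r T.leadingCoeff_r_pos T.roots_r_neg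
  simp only [hs, eval_add, eval_mul, eval_sub, eval_pow, eval_X, eval_ofNat, mul_zero, zero_mul,
    sub_zero]
  positivity

theorem neg_one_pow_mul_eval_lower_pos (T : InterlacedTriple p q r k (k + e) a b c)
    (he : e ≤ 1) (hs : s = X ^ e * (20 * r - 384 * X * p) + 8 * (3 - 8 * X) * q) {β : ℝ}
    (hβ : 0 < (-1) ^ (k + e + 1) * s.eval β) {i : ℕ} (hi : i < k + e + 1) :
    0 < (-1) ^ (k + e + i + 1) * s.eval (if i = 0 then β else b i) := by
  rcases i with _ | i
  · simpa using hβ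
  · rw [if_neg (by omega), show (-1 : ℝ) ^ (k + e + (i + 1) + 1) = (-1) ^ (k + e + i) by ring]
    exact T.neg_one_pow_mul_eval_q_root_pos he hs (by omega)

theorem neg_one_pow_mul_eval_upper_pos (T : InterlacedTriple p q r k (k + e) a b c)
    (he : e ≤ 1) (hs : s = X ^ e * (20 * r - 384 * X * p) + 8 * (3 - 8 * X) * q) {i : ℕ}
    (hi : i < k + e + 1) :
    0 < (-1) ^ (k + e + i) * s.eval (if i ≤ k then c (i + 1) else 0) := by
  by_cases hik : i ≤ k
  · rw [if_pos hik]
    exact T.neg_one_pow_mul_eval_r_root_pos hs (by omega)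
  · rw [if_neg hik, show k + e + i = 2 * (k + 1) by omega, pow_mul, neg_one_sq, one_pow, one_mul]
    exact T.eval_zero_pos hs

theorem exists_next (T : InterlacedTriple p q r k (k + e) a b c) (he : e ≤ 1)
    (hs : s = X ^ e * (20 * r - 384 * X * p) + 8 * (3 - 8 * X) * q) :
    ∃ d, InterlacedTriple q r s (k + e) (k + 1) b c d := by
  obtain ⟨hsdeg, hslc⟩ := natDegree_leadingCoeff_of_recurrence hs T.natDegree_p T.natDegree_q
    T.natDegree_r T.leadingCoeff_p_pos T.leadingCoeff_q_pos T.leadingCoeff_r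
  have hslc_pos : 0 < s.leadingCoeff := by
    rw [hslc]; linarith [T.leadingCoeff_q_pos, T.leadingCoeff_r_pos]
  obtain ⟨β, hβc, hβ⟩ := exists_lt_neg_one_pow_mul_eval_pos (by omega) hslc_pos (c 1)
  rw [hsdeg] at hβ
  -- root `i + 1` of `s` will lie in `(lower i, upper i)`; the endpoint `0` is used only if `e = 1`
  let lower : ℕ → ℝ := fun i => if i = 0 then β else b i
  let upper : ℕ → ℝ := fun i => if i ≤ k then c (i + 1) else 0
  have hlower_upper : ∀ i < k + e + 1, lower i < upper i := by
    rintro (_ | i) hik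
    · simpa [lower, upper] using hβc
    simp only [lower, upper, if_neg (Nat.succ_ne_zero i)]
    split_ifs with hik'
    · exact T.interlaces_rq.2 (i + 1) (by omega) (by omega)
    · exact T.roots_q_neg (i + 1) (by omega) (by omega)
  have hupper_lower : ∀ i, i + 1 < k + e + 1 → upper i ≤ lower (i + 1) := fun i hik => by
    simp only [lower, upper, if_pos (show i ≤ k by omega), if_neg (Nat.succ_ne_zero i)]
    exact (T.interlaces_rq.1 (i + 1) (by omega) (by omega)).le
  obtain ⟨d, hd, hd_mem⟩ := exists_sortedRoots_of_eval_mul_neg hsdeg hlower_upper hupper_lower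
    fun i hik => mul_neg_of_neg_one_pow_mul_pos (T.neg_one_pow_mul_eval_lower_pos he hs hβ hik)
      (T.neg_one_pow_mul_eval_upper_pos he hs hik)
  have hd_lt_c : ∀ i, 1 ≤ i → i ≤ k + 1 → d i < c i := by
    rintro (_ | i) hi1 hik
    · omega
    · simpa [upper, show i ≤ k by omega] using (hd_mem i (by omega)).2
  have hb_lt_d : ∀ i, 1 ≤ i → i < k + e + 1 → b i < d (i + 1) := fun i hi1 hik => by
    simpa [lower, show i ≠ 0 by omega] using (hd_mem i hik).1
  have hd_lt_b : ∀ i, 1 ≤ i → i ≤ k + e → d i < b i := by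
    rintro (_ | i) hi1 hik
    · omega
    · simpa [lower] using (hd_mem i (by omega)).2.trans_le (hupper_lower i (by omega))
  have hd_neg : ∀ i, 1 ≤ i → i ≤ k + e + 1 → d i < 0 := by
    rintro (_ | i) hi1 hik
    · omega
    · refine (hd_mem i (by omega)).2.trans_le ?_
      simp only [upper]
      split_ifs
      exacts [(T.roots_r_neg (i + 1) hi1 (by omega)).le, le_rfl]
  exact ⟨d, T.natDegree_q, T.natDegree_r, hsdeg, T.leadingCoeff_q_pos, T.leadingCoeff_r_pos, hslc,
    T.sortedRoots_q, T.sortedRoots_r, hd, T.roots_r_neg, hd_neg, T.interlaces_rq,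
    ⟨hd_lt_c, fun i hi1 hik => (T.interlaces_rq.1 i hi1 (by omega)).trans (hb_lt_d i hi1 hik)⟩,
    ⟨hd_lt_b, hb_lt_d⟩⟩

end InterlacedTriple

theorem interlacedTriple_base : ∃ a b c, InterlacedTriple (2 * (1 + X)) (8 * (5 + 3 * X))
    (16 * (3 + 45 * X + 16 * X ^ 2)) 1 1 a b c := by
  have hp : (2 * (1 + X) : ℝ[X]).natDegree = 1 := by compute_degree!
  have hq : (8 * (5 + 3 * X) : ℝ[X]).natDegree = 1 := by compute_degree!
  have hr : (16 * (3 + 45 * X + 16 * X ^ 2) : ℝ[X]).natDegree = 2 := by compute_degree!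
  have hlcp : (2 * (1 + X) : ℝ[X]).leadingCoeff = 2 := by
    rw [leadingCoeff, hp]; norm_num [coeff_one]
  have hlcq : (8 * (5 + 3 * X) : ℝ[X]).leadingCoeff = 24 := by
    rw [leadingCoeff, hq]; norm_num [coeff_one]
  have hlcr : (16 * (3 + 45 * X + 16 * X ^ 2) : ℝ[X]).leadingCoeff = 256 := by
    rw [leadingCoeff, hr]; norm_num [coeff_one, coeff_X]
  -- the roots are `-1`, `-5/3` and `(-45 ± √1833) / 32 ≈ -2.74, -0.07`
  obtain ⟨a, ha, ha'⟩ := exists_sortedRoots_of_eval_mul_neg hp (l := fun _ => -3 / 2)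
    (u := fun _ => -1 / 2) (fun _ _ => by norm_num) (fun _ _ => by omega)
    (fun _ _ => by norm_num)
  obtain ⟨b, hb, hb'⟩ := exists_sortedRoots_of_eval_mul_neg hq (l := fun _ => -2)
    (u := fun _ => -3 / 2) (fun _ _ => by norm_num) (fun _ _ => by omega)
    (fun _ _ => by norm_num)
  obtain ⟨c, hc, hc'⟩ := exists_sortedRoots_of_eval_mul_neg hr
    (l := fun i => if i = 0 then -3 else -1 / 2) (u := fun i => if i = 0 then -2 else 0)
    (fun i _ => by split_ifs <;> norm_num) (fun i _ => by rw [show i = 0 by omega]; norm_num)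
    (fun i hi => by interval_cases i <;> norm_num)
  have ha1 := ha' 0 one_pos
  have hb1 := hb' 0 one_pos
  have hc1 := hc' 0 two_pos
  have hc2 := hc' 1 one_lt_two
  norm_num at ha1 hb1 hc1 hc2
  refine ⟨a, b, c, hp, hq, hr, by rw [hlcp]; norm_num, by rw [hlcq]; norm_num,
    by rw [hlcr, hlcq, hlcp]; norm_num, ha, hb, hc, ?_, ?_, ⟨?_, ?_⟩, ⟨?_, ?_⟩, ⟨?_, ?_⟩⟩ <;>
    intro i h1 h2 <;> interval_cases i <;> linarith

section ClawPolynomials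

variable {W : ℕ → ℝ[X]}

theorem eq_X_pow_mod_two_mul_add
    (hrec : ∀ n, (Even (n + 3) → W (n + 3) =
        20 * X * W (n + 2) + 8 * (3 - 8 * X) * W (n + 1) - 384 * X ^ 2 * W n) ∧
      (Odd (n + 3) → W (n + 3) =
        20 * W (n + 2) + 8 * (3 - 8 * X) * W (n + 1) - 384 * X * W n)) (n : ℕ) :
    W (n + 3) = X ^ (n % 2) * (20 * W (n + 2) - 384 * X * W n) + 8 * (3 - 8 * X) * W (n + 1) := by
  rcases Nat.even_or_odd n with hn | hn
  · rw [Nat.even_iff.mp hn, (hrec n).2 (hn.add_odd (by decide))]; ring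
  · rw [Nat.odd_iff.mp hn, (hrec n).1 (hn.add_odd (by decide))]; ring

theorem exists_interlacedTriple
    (h0 : W 0 = 2 * (1 + X)) (h1 : W 1 = 8 * (5 + 3 * X))
    (h2 : W 2 = 16 * (3 + 45 * X + 16 * X ^ 2))
    (hrec : ∀ n, (Even (n + 3) → W (n + 3) =
        20 * X * W (n + 2) + 8 * (3 - 8 * X) * W (n + 1) - 384 * X ^ 2 * W n) ∧
      (Odd (n + 3) → W (n + 3) =
        20 * W (n + 2) + 8 * (3 - 8 * X) * W (n + 1) - 384 * X * W n)) :
    ∀ n, ∃ a b c, InterlacedTriple (W n) (W (n + 1)) (W (n + 2)) ((n + 2) / 2) ((n + 3) / 2) a b c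
  | 0 => by rw [h0, h1, h2]; exact interlacedTriple_base
  | n + 1 => by
    obtain ⟨_, b, c, T⟩ := exists_interlacedTriple h0 h1 h2 hrec n
    rw [show (n + 3) / 2 = (n + 2) / 2 + n % 2 by omega] at T
    obtain ⟨d, hd⟩ := T.exists_next (by omega) (eq_X_pow_mod_two_mul_add hrec n)
    rw [show (n + 2) / 2 + n % 2 = (n + 1 + 2) / 2 by omega,
      show (n + 2) / 2 + 1 = (n + 1 + 3) / 2 by omega] at hd
    exact ⟨b, c, d, hd⟩

end ClawPolynomials

theorem stmt12 (W : ℕ → Polynomial ℝ)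
    (h0 : W 0 = 2 * (1 + X)) (h1 : W 1 = 8 * (5 + 3 * X))
    (h2 : W 2 = 16 * (3 + 45 * X + 16 * X ^ 2))
    (hrec : ∀ n, (Even (n + 3) → W (n + 3) =
        20 * X * W (n + 2) + 8 * (3 - 8 * X) * W (n + 1) - 384 * X ^ 2 * W n) ∧
      (Odd (n + 3) → W (n + 3) =
        20 * W (n + 2) + 8 * (3 - 8 * X) * W (n + 1) - 384 * X * W n)) :
    ∀ n, 2 ≤ n → ∀ x y : ℕ → ℝ,
      (∀ i j, 1 ≤ i → i < j → j ≤ (n + 2) / 2 → x i < x j) →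
      (∀ i j, 1 ≤ i → i < j → j ≤ n / 2 → y i < y j) →
      (W n).roots.card = (n + 2) / 2 →
      (W (n - 2)).roots.card = n / 2 →
      (∀ i, 1 ≤ i → i ≤ (n + 2) / 2 → x i < 0) →
      (∀ i, 1 ≤ i → i ≤ n / 2 → y i < 0) →
      (W n).roots.toFinset = Finset.image x (Finset.Icc 1 ((n + 2) / 2)) →
      (W (n - 2)).roots.toFinset = Finset.image y (Finset.Icc 1 (n / 2)) →
      ∀ i, 1 ≤ i → i ≤ n / 2 → x i < y i ∧ y i < x (i + 1) := by
  intro n hn x y hx hy hxcard hycard _ _ hxroots hyroots i hi1 hi2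
  obtain ⟨k, rfl⟩ := Nat.exists_eq_add_of_le' hn
  obtain ⟨a, _, c, T⟩ := exists_interlacedTriple h0 h1 h2 hrec k
  rw [show (k + 2 + 2) / 2 = (k + 2) / 2 + 1 by omega] at hx hxcard hxroots
  rw [Nat.add_sub_cancel] at hycard hyroots
  have hxc := SortedRoots.eqOn ⟨hxcard, hxroots, fun i hi j hj hij => hx i j hi.1 hij hj.2⟩
    T.sortedRoots_r
  have hya := SortedRoots.eqOn ⟨hycard, hyroots, fun i hi j hj hij => hy i j hi.1 hij hj.2⟩
    T.sortedRoots_p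
  rw [hxc ⟨hi1, by omega⟩, hya ⟨hi1, hi2⟩, hxc ⟨by omega, by omega⟩]
  exact ⟨T.interlaces_rp.1 i hi1 hi2, T.interlaces_rp.2 i hi1 (by omega)⟩
end

section
/- Let g : ℕ × ℤ → ℤ be the iterated-claw coefficient function (g(0,0)=2, g(0,1)=2, g(1,1)=40, g(1,2)=24, g(2,1)=48, g(2,2)=720, g(2,3)=256, g=0 elsewhere for n≤2 and for i<0, and g(n,i) = 20g(n-1,i-1) + 24g(n-2,i-1) - 64g(n-2,i-2) - 384g(n-3,i-3) for n≥3). Then for each n the sequence i ↦ g(n,i) has no internal zeros: if g(n,i) ≠ 0, g(n,k) ≠ 0, and i < j < k, then g(n,j) ≠ 0. -/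
/-!
Row `n` of `g` is supported on `⌈n/2⌉ ≤ i ≤ n + 1`, so it suffices to show that `g` is positive
there. The top entries `T n = g (n, n + 1)` satisfy `T (n+3) = 20 T (n+2) - 64 T (n+1) - 384 T n`,
whose characteristic polynomial is `(t - 12) (t² - 8t - 32)`; since `T 2 = 8 T 1 + 32 T 0`, in fact
`T (n+2) = 8 T (n+1) + 32 T n`, and the top entries are positive. Below the top, each row dominates
twelve times the previous one shifted by one, `12 g (n, i - 1) ≤ g (n + 1, i)` for `i ≤ n + 1`,
and this domination propagates through the recurrence. It yields
`g (n + 3, i) ≥ 24 g (n + 1, i - 1)`, which is positive on the support.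
-/

def ClawRecurrence (g : ℕ × ℤ → ℤ) : Prop :=
  ∀ n : ℕ, ∀ i : ℤ, g (n + 3, i) =
    20 * g (n + 2, i - 1) + 24 * g (n + 1, i - 1) - 64 * g (n + 1, i - 2) - 384 * g (n, i - 3)

def VanishesOutsideSupport (g : ℕ × ℤ → ℤ) : Prop :=
  ∀ n : ℕ, ∀ i : ℤ, 2 * i < n ∨ (n : ℤ) + 1 < i → g (n, i) = 0

def DominatesPrev (g : ℕ × ℤ → ℤ) (n : ℕ) : Prop :=
  ∀ i : ℤ, i ≤ n + 1 → 12 * g (n, i - 1) ≤ g (n + 1, i)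

theorem pos_of_add_two_eq {u : ℕ → ℤ} {a b : ℤ} (ha : 0 < a) (hb : 0 ≤ b)
    (hu : ∀ n, u (n + 2) = a * u (n + 1) + b * u n) (h₀ : 0 < u 0) (h₁ : 0 < u 1) (n : ℕ) :
    0 < u n := by
  induction n using Nat.twoStepInduction with
  | zero => exact h₀
  | one => exact h₁
  | more n ih₀ ih₁ =>
    rw [hu]
    positivity

variable {g : ℕ × ℤ → ℤ}

namespace VanishesOutsideSupport

theorem nonneg_row_zero (hsupp : VanishesOutsideSupport g) (h₀ : 0 ≤ g (0, 0))
    (h₁ : 0 ≤ g (0, 1)) (i : ℤ) : 0 ≤ g (0, i) := by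
  by_cases h : i < 0 ∨ 1 < i
  · exact (hsupp 0 i (by omega)).ge
  · obtain rfl | rfl : i = 0 ∨ i = 1 := by omega
    exacts [h₀, h₁]

theorem dominatesPrev_zero (hsupp : VanishesOutsideSupport g) (h : 12 * g (0, 0) ≤ g (1, 1)) :
    DominatesPrev g 0 := by
  intro i hi
  by_cases hi₁ : i < 1
  · simp [hsupp 0 (i - 1) (by omega), hsupp 1 i (by omega)]
  · obtain rfl : i = 1 := by omega
    exact h

theorem dominatesPrev_one (hsupp : VanishesOutsideSupport g) (h₁ : 0 ≤ g (2, 1))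
    (h₂ : 12 * g (1, 1) ≤ g (2, 2)) : DominatesPrev g 1 := by
  intro i hi
  by_cases hi₁ : i < 1
  · simp [hsupp 1 (i - 1) (by omega), hsupp 2 i (by omega)]
  · obtain rfl | rfl : i = 1 ∨ i = 2 := by omega
    · simpa [hsupp 1 0 (by omega)] using h₁
    · exact h₂

end VanishesOutsideSupport

namespace ClawRecurrence

theorem vanishesOutsideSupport (hrec : ClawRecurrence g)
    (hbase : ∀ n : ℕ, n ≤ 2 → ∀ i : ℤ, 2 * i < n ∨ (n : ℤ) + 1 < i → g (n, i) = 0) :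
    VanishesOutsideSupport g := by
  intro n
  induction n using Nat.strong_induction_on with
  | _ n ih =>
    obtain hn | ⟨n, rfl⟩ : n ≤ 2 ∨ ∃ m, n = m + 3 :=
      (le_or_gt n 2).imp_right fun h ↦ ⟨n - 3, by omega⟩
    · exact hbase n hn
    · intro i hi
      push_cast at hi
      rw [hrec, ih (n + 2) (by omega) _ (by push_cast; omega),
        ih (n + 1) (by omega) (i - 1) (by push_cast; omega),
        ih (n + 1) (by omega) (i - 2) (by push_cast; omega), ih n (by omega) _ (by omega)]
      ring

theorem top_add_two (hrec : ClawRecurrence g) (habove : ∀ n : ℕ, g (n, n + 2) = 0)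
    (h₀ : g (2, 3) = 8 * g (1, 2) + 32 * g (0, 1)) (n : ℕ) :
    g (n + 2, ((n + 2 : ℕ) : ℤ) + 1) = 8 * g (n + 1, ((n + 1 : ℕ) : ℤ) + 1) + 32 * g (n, n + 1) := by
  induction n with
  | zero => simpa using h₀
  | succ n ih =>
    have h := hrec n (n + 4)
    have hz := habove (n + 1)
    push_cast at ih hz ⊢
    ring_nf at h hz ih ⊢
    linarith

/-- Comes from the identity
`g (n + 3, i) - 12 * g (n + 2, i - 1) - 24 * g (n + 1, i - 1)
  = 8 * (g (n + 2, i - 1) - 12 * g (n + 1, i - 2)) + 32 * (g (n + 1, i - 2) - 12 * g (n, i - 3))`. -/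
theorem add_le_of_dominatesPrev (hrec : ClawRecurrence g) {n : ℕ} (h₁ : DominatesPrev g (n + 1))
    (h₀ : DominatesPrev g n) {i : ℤ} (hi : i ≤ n + 3) :
    12 * g (n + 2, i - 1) + 24 * g (n + 1, i - 1) ≤ g (n + 3, i) := by
  have d₁ := h₁ (i - 1) (by push_cast; omega)
  have d₀ := h₀ (i - 2) (by omega)
  rw [hrec]
  ring_nf at d₁ d₀ ⊢
  linarith

theorem dominatesPrev_add_two (hrec : ClawRecurrence g) {n : ℕ}
    (hnonneg : ∀ i, 0 ≤ g (n + 1, i)) (h₁ : DominatesPrev g (n + 1)) (h₀ : DominatesPrev g n) :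
    DominatesPrev g (n + 2) := by
  intro i hi
  have := hrec.add_le_of_dominatesPrev h₁ h₀ (i := i) (by push_cast at hi; omega)
  linarith [hnonneg (i - 1)]

theorem nonneg_and_dominatesPrev (hrec : ClawRecurrence g) (hsupp : VanishesOutsideSupport g)
    (htop : ∀ n : ℕ, 0 < g (n, n + 1)) (hnonneg₀ : ∀ i, 0 ≤ g (0, i))
    (hdom₀ : DominatesPrev g 0) (hdom₁ : DominatesPrev g 1) (n : ℕ) :
    (∀ i, 0 ≤ g (n, i)) ∧ DominatesPrev g n ∧ DominatesPrev g (n + 1) := by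
  induction n with
  | zero => exact ⟨hnonneg₀, hdom₀, hdom₁⟩
  | succ n ih =>
    obtain ⟨hnonneg, hdom, hdom'⟩ := ih
    have hnonneg' : ∀ i, 0 ≤ g (n + 1, i) := by
      intro i
      rcases lt_trichotomy i (n + 2) with hi | rfl | hi
      · linarith [hdom i (by omega), hnonneg (i - 1)]
      · exact_mod_cast (htop (n + 1)).le
      · exact (hsupp (n + 1) i (by push_cast; omega)).ge
    exact ⟨hnonneg', hdom', hrec.dominatesPrev_add_two hnonneg' hdom' hdom⟩

theorem pos_of_mem_support (hrec : ClawRecurrence g) (htop : ∀ n : ℕ, 0 < g (n, n + 1))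
    (hnonneg : ∀ n i, 0 ≤ g (n, i)) (hdom : ∀ n, DominatesPrev g n)
    (h₀₀ : 0 < g (0, 0)) (h₁₁ : 0 < g (1, 1)) (h₂₁ : 0 < g (2, 1)) (h₂₂ : 0 < g (2, 2)) :
    ∀ n : ℕ, ∀ i : ℤ, n ≤ 2 * i → i ≤ n + 1 → 0 < g (n, i) := by
  intro n
  induction n using Nat.strong_induction_on with
  | _ n ih =>
    intro i hlo hhi
    rcases eq_or_lt_of_le hhi with rfl | hhi
    · exact htop n
    obtain hn | ⟨n, rfl⟩ : n ≤ 2 ∨ ∃ m, n = m + 3 :=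
      (le_or_gt n 2).imp_right fun h ↦ ⟨n - 3, by omega⟩
    · obtain ⟨rfl, rfl⟩ | ⟨rfl, rfl⟩ | ⟨rfl, rfl⟩ | ⟨rfl, rfl⟩ :
          (n = 0 ∧ i = 0) ∨ (n = 1 ∧ i = 1) ∨ (n = 2 ∧ i = 1) ∨ (n = 2 ∧ i = 2) := by omega
      exacts [h₀₀, h₁₁, h₂₁, h₂₂]
    · push_cast at hlo hhi
      have := hrec.add_le_of_dominatesPrev (hdom (n + 1)) (hdom n) (i := i) (by omega)
      have := ih (n + 1) (by omega) (i - 1) (by push_cast; omega) (by push_cast; omega)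
      linarith [hnonneg (n + 2) (i - 1)]

end ClawRecurrence

theorem stmt16_general (g : ℕ × ℤ → ℤ)
    (h00 : g (0, 0) = 2) (h01 : g (0, 1) = 2)
    (h11 : g (1, 1) = 40) (h12 : g (1, 2) = 24)
    (h21 : g (2, 1) = 48) (h22 : g (2, 2) = 720) (h23 : g (2, 3) = 256)
    (hzero : ∀ n : ℕ, ∀ i : ℤ, n ≤ 2 →
      (n, i) ∉ ({(0, 0), (0, 1), (1, 1), (1, 2), (2, 1), (2, 2), (2, 3)} : Set (ℕ × ℤ)) →
      g (n, i) = 0)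
    (hrec : ∀ n : ℕ, ∀ i : ℤ, g (n + 3, i) =
      20 * g (n + 2, i - 1) + 24 * g (n + 1, i - 1) - 64 * g (n + 1, i - 2)
        - 384 * g (n, i - 3)) :
    ∀ n : ℕ, ∀ i j k : ℤ, i < j → j < k →
      g (n, i) ≠ 0 → g (n, k) ≠ 0 → g (n, j) ≠ 0 := by
  have hrec : ClawRecurrence g := hrec
  have hsupp := hrec.vanishesOutsideSupport fun n hn i hi ↦ hzero n i hn (by
    simp only [Set.mem_insert_iff, Set.mem_singleton_iff, Prod.ext_iff]; omega)
  have htop : ∀ n : ℕ, 0 < g (n, n + 1) :=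
    pos_of_add_two_eq (by norm_num) (by norm_num)
      (hrec.top_add_two (fun n ↦ hsupp n _ (by omega)) (by norm_num [h23, h12, h01]))
      (by norm_num [h01]) (by norm_num [h12])
  have hrows := hrec.nonneg_and_dominatesPrev hsupp htop
    (hsupp.nonneg_row_zero (by norm_num [h00]) (by norm_num [h01]))
    (hsupp.dominatesPrev_zero (by norm_num [h00, h11]))
    (hsupp.dominatesPrev_one (by norm_num [h21]) (by norm_num [h11, h22]))
  have hpos := hrec.pos_of_mem_support htop (fun n ↦ (hrows n).1) (fun n ↦ (hrows n).2.1)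
    (by norm_num [h00]) (by norm_num [h11]) (by norm_num [h21]) (by norm_num [h22])
  intro n i j k hij hjk hi hk
  have hi_supp := mt (hsupp n i) hi
  have hk_supp := mt (hsupp n k) hk
  exact (hpos n j (by omega) (by omega)).ne'

theorem stmt16 (g : ℕ × ℤ → ℤ)
    (hneg : ∀ n : ℕ, ∀ i : ℤ, i < 0 → g (n, i) = 0)
    (h00 : g (0, 0) = 2) (h01 : g (0, 1) = 2)
    (h11 : g (1, 1) = 40) (h12 : g (1, 2) = 24)
    (h21 : g (2, 1) = 48) (h22 : g (2, 2) = 720) (h23 : g (2, 3) = 256)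
    (hzero : ∀ n : ℕ, ∀ i : ℤ, n ≤ 2 →
      (n, i) ∉ ({(0, 0), (0, 1), (1, 1), (1, 2), (2, 1), (2, 2), (2, 3)} : Set (ℕ × ℤ)) →
      g (n, i) = 0)
    (hrec : ∀ n : ℕ, ∀ i : ℤ, g (n + 3, i) =
      20 * g (n + 2, i - 1) + 24 * g (n + 1, i - 1) - 64 * g (n + 1, i - 2)
        - 384 * g (n, i - 3)) :
    ∀ n : ℕ, ∀ i j k : ℤ, i < j → j < k →
      g (n, i) ≠ 0 → g (n, k) ≠ 0 → g (n, j) ≠ 0 :=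
  stmt16_general g h00 h01 h11 h12 h21 h22 h23 hzero hrec
end

section
/- Let M(z) be the 3×3 matrix over ℝ[z] with rows (0,2,8), (12z,12z,0), (4z^2,2z,8z), and let Γ_n(z) be defined by Γ_0=2+2z, Γ_1=40z+24z^2, Γ_2=48z+720z^2+256z^3 and the recurrence Γ_n = 20zΓ_{n-1} + 8z(3-8z)Γ_{n-2} - 384z^3Γ_{n-3} for n≥3. Then for all n ≥ 0, the sum of the entries of the third column of M(z)^{n+1} equals 4·Γ_n(z). -/
/-!
The matrix satisfies `M³ = 20z M² + 8z(3 - 8z) M - 384z³ I` (its characteristic polynomial is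
`t³ - 20z t² - 8z(3 - 8z) t + 384z³`), so every linear functional of `M ^ (n + 1)`, in particular
a column sum, obeys the recurrence defining `Γ`. Both sides then agree because their first three
terms do.
-/

open Polynomial Matrix

namespace LinearRecurrence

variable {R A : Type*} [CommSemiring R] [Semiring A] [Algebra R A] (E : LinearRecurrence R)

theorem isSolution_of_pow_order_eq {a : A} (ha : a ^ E.order = ∑ i, E.coeffs i • a ^ (i : ℕ))
    (L : A →ₗ[R] R) (b : A) : E.IsSolution fun n ↦ L (a ^ n * b) := by
  intro n
  simp [pow_add, ha, Finset.mul_sum, Finset.sum_mul]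

end LinearRecurrence

-- Mathlib's convention: `coeffs i` multiplies `u (n + i)` in the expression for `u (n + order)`.
noncomputable def gammaRecurrence : LinearRecurrence ℝ[X] :=
  ⟨3, ![-(384 * X ^ 3), 8 * X * (3 - 8 * X), 20 * X]⟩

noncomputable def gammaMatrix : Matrix (Fin 3) (Fin 3) ℝ[X] :=
  !![0, 2, 8; 12 * X, 12 * X, 0; 4 * X ^ 2, 2 * X, 8 * X]

theorem gammaMatrix_pow_order :
    gammaMatrix ^ gammaRecurrence.order = ∑ i, gammaRecurrence.coeffs i • gammaMatrix ^ (i : ℕ) := by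
  change gammaMatrix ^ 3 = ∑ i : Fin 3, _
  ext i j : 1
  fin_cases i <;> fin_cases j <;>
    simp [gammaRecurrence, gammaMatrix, pow_succ, Fin.sum_univ_three, Matrix.mul_apply] <;> ring

theorem isSolution_gammaRecurrence {u : ℕ → ℝ[X]}
    (hu : ∀ n, u (n + 3) = 20 * X * u (n + 2) + 8 * X * (3 - 8 * X) * u (n + 1) - 384 * X ^ 3 * u n) :
    gammaRecurrence.IsSolution u := by
  intro n
  change u (n + 3) = ∑ i : Fin 3, ![-(384 * X ^ 3), 8 * X * (3 - 8 * X), 20 * X] i * u (n + i)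
  simp only [Fin.sum_univ_three, Fin.val_zero, Fin.val_one, Fin.val_two, cons_val_zero, cons_val_one,
    cons_val, add_zero, hu]
  ring

theorem stmt18 (M : Matrix (Fin 3) (Fin 3) (Polynomial ℝ))
    (hM : M = !![0, 2, 8; 12 * X, 12 * X, 0; 4 * X ^ 2, 2 * X, 8 * X])
    (Γ : ℕ → Polynomial ℝ)
    (h0 : Γ 0 = 2 + 2 * X) (h1 : Γ 1 = 40 * X + 24 * X ^ 2)
    (h2 : Γ 2 = 48 * X + 720 * X ^ 2 + 256 * X ^ 3)
    (hrec : ∀ n, Γ (n + 3) =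
      20 * X * Γ (n + 2) + 8 * X * (3 - 8 * X) * Γ (n + 1) - 384 * X ^ 3 * Γ n) :
    ∀ n, ∑ i : Fin 3, (M ^ (n + 1)) i 2 = 4 * Γ n := by
  obtain rfl : M = gammaMatrix := hM
  have hcol : gammaRecurrence.IsSolution fun n ↦ ∑ i : Fin 3, (gammaMatrix ^ (n + 1)) i 2 := by
    simpa [pow_succ] using gammaRecurrence.isSolution_of_pow_order_eq gammaMatrix_pow_order
      (∑ i, Matrix.entryLinearMap ℝ[X] ℝ[X] i 2) gammaMatrix
  have hΓ : gammaRecurrence.IsSolution fun n ↦ 4 * Γ n :=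
    isSolution_gammaRecurrence fun n ↦ by rw [hrec]; ring
  refine congrFun ((gammaRecurrence.eq_iff_eqOn_range_order _ _ hcol hΓ).2 fun k hk ↦ ?_)
  obtain rfl | rfl | rfl : k = 0 ∨ k = 1 ∨ k = 2 := by
    simp only [gammaRecurrence, Finset.coe_range, Set.mem_Iio] at hk; omega
  all_goals simp [gammaMatrix, h0, h1, h2, pow_succ, Matrix.mul_apply, Fin.sum_univ_three]; ring
end
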